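/- arXiv:0903.5361 — 11 statements merged into one kernel-verified Lean document; each statement's English description precedes it below -/
import Mathlib

section
/- Let D be a disk-polygon with center parameter d, where 1 ≤ d < √3. Then the inradius of D is at least the inradius of the regular disk-triangle Δ(d); explicitly, r(D) ≥ 1 − d/√3. -/
open Metric Real MeasureTheory
open scoped InnerProductSpace Pointwise ENNReal

noncomputable section

/-- The Euclidean plane. -/
abbrev E2 := EuclideanSpace ℝ (Fin 2)

/-- The point of the Euclidean plane with the given coordinates. -/
def pt (a b : ℝ) : E2 := (EuclideanSpace.equiv (Fin 2) ℝ).symm ![a, b]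

/-- The width of a set `C` in the direction of the unit vector `u`. -/
def dirWidth (C : Set E2) (u : E2) : ℝ :=
  sSup {w : ℝ | ∃ x ∈ C, ∃ y ∈ C, w = ⟪x - y, u⟫_ℝ}

/-- The minimal width of a set: the infimum of the directional widths over all
unit vectors. -/
def minWidth (C : Set E2) : ℝ :=
  sInf {w : ℝ | ∃ u : E2, ‖u‖ = 1 ∧ w = dirWidth C u}

/-- The inradius of a set. -/
def inradius (C : Set E2) : ℝ :=
  sSup {r : ℝ | 0 ≤ r ∧ ∃ c : E2, closedBall c r ⊆ C}

/-- The circumradius of a set. -/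
def circumradius (C : Set E2) : ℝ :=
  sInf {r : ℝ | 0 ≤ r ∧ ∃ c : E2, C ⊆ closedBall c r}

/-- The dual disk-polygon of a set `D`. -/
def dualDP (D : Set E2) : Set E2 := {y : E2 | ∀ x ∈ D, dist x y ≤ 1}

lemma le_of_sq_le_sq' {A B : ℝ} (hA : 0 ≤ A) (hB : 0 ≤ B) (h : A^2 ≤ B^2) : A ≤ B := by
  nlinarith


lemma jung_alg (r s x y : ℝ) (h3 : r^2 = 3) (h3p : 0 < r)
    (hs : 0 ≤ s) (hy : 0 ≤ y) (hx : 0 ≤ x)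
    (h1 : (x + s)^2 + y^2 ≤ 4 * s^2) :
    s^2 + (min y (s / r))^2 ≤ 4 * s^2 / 3 ∧
      x^2 + (y - min y (s / r))^2 ≤ 4 * s^2 / 3 := by
  have hsr : 0 ≤ s / r := by positivity
  have ht0 : 0 ≤ min y (s / r) := le_min hy hsr
  have hxs : x ≤ s := by nlinarith [sq_nonneg y]
  constructor
  · have hm : min y (s / r) ≤ s / r := min_le_right _ _
    have hsq : (min y (s / r))^2 ≤ (s / r)^2 := pow_le_pow_left₀ ht0 hm 2
    have hq : (s / r)^2 = s^2 / 3 := by rw [div_pow, h3]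
    nlinarith
  · rcases le_total y (s / r) with hc | hc
    · rw [min_eq_left hc]
      nlinarith
    · rw [min_eq_right hc]
      have hws : s ≤ y * r := by
        rw [div_le_iff₀ h3p] at hc; linarith
      have hwnn : 0 ≤ y * r := mul_nonneg hy h3p.le
      have hWnn : (0:ℝ) ≤ 9*s^2 - 6*s*x - 3*x^2 := by nlinarith [sq_nonneg y]
      obtain ⟨W, hWnn', hW2⟩ : ∃ W : ℝ, 0 ≤ W ∧ W^2 = 9*s^2 - 6*s*x - 3*x^2 :=
        ⟨Real.sqrt _, Real.sqrt_nonneg _, Real.sq_sqrt hWnn⟩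
      have hwW : y * r ≤ W := by
        nlinarith [sq_nonneg (W - y*r), sq_nonneg (W + y*r)]
      have h3sx : 3 * (s - x) ≤ W := by
        nlinarith [mul_nonneg hx (sub_nonneg.2 hxs), sq_nonneg (W - 3*(s-x)), sq_nonneg (W + 3*(s-x))]
      have hC : 0 ≤ W - y * r := by linarith
      have hD : 0 ≤ W + y * r - 2 * s := by linarith
      have key : (y*r)^2 - 2*(y*r)*s + 3*x^2 - 3*s^2 ≤ 0 := by
        nlinarith [hW2, mul_nonneg hC hD, mul_nonneg hs (sub_nonneg.2 h3sx)]
      have hsrw : s / r = s * r / 3 := by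
        rw [div_eq_div_iff h3p.ne' (by norm_num : (3:ℝ) ≠ 0)]
        linear_combination (-s) * h3
      rw [hsrw]
      have heq : 3*(x^2 + (y - s*r/3)^2) =
          ((y*r)^2 - 2*(y*r)*s + 3*x^2 - 3*s^2) + 4*s^2 := by
        linear_combination (s^2/3 - y^2) * h3
      linarith [key, heq]

set_option maxHeartbeats 1000000 in
lemma jung3max (a b c : E2) (hac : dist a c ≤ dist a b) (hbc : dist b c ≤ dist a b)
    (hin : 0 ≤ ⟪c - midpoint ℝ a b, b - a⟫_ℝ) :
    ∃ p : E2, dist p a ≤ dist a b / Real.sqrt 3 ∧ dist p b ≤ dist a b / Real.sqrt 3 ∧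
      dist p c ≤ dist a b / Real.sqrt 3 := by
  have h3 : (Real.sqrt 3)^2 = 3 := Real.sq_sqrt (by norm_num)
  have h3p : 0 < Real.sqrt 3 := Real.sqrt_pos.2 (by norm_num)
  rcases eq_or_ne a b with rfl | hab
  · have hca : dist a c = 0 := le_antisymm (by simpa using hac) dist_nonneg
    have hc : c = a := by rw [dist_comm] at hca; exact dist_eq_zero.1 hca
    exact ⟨a, by simp [hc], by simp [hc], by simp [hc, dist_comm]⟩
  · set v : E2 := b - a with hv
    have hvne : v ≠ 0 := sub_ne_zero.2 (Ne.symm hab)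
    have hnv : 0 < ‖v‖ := norm_pos_iff.2 hvne
    set s : ℝ := ‖v‖ / 2 with hs
    have hspos : 0 < s := by positivity
    set e : E2 := ‖v‖⁻¹ • v with he
    have hne : ‖e‖ = 1 := by
      rw [he, norm_smul, norm_inv, norm_norm, inv_mul_cancel₀ hnv.ne']
    set o : E2 := midpoint ℝ a b with ho
    set x : ℝ := ⟪c - o, e⟫_ℝ with hx
    have hx0 : 0 ≤ x := by
      rw [hx, he, real_inner_smul_right]
      exact mul_nonneg (by positivity) hin
    set w : E2 := (c - o) - x • e with hw
    have hwe : ⟪e, w⟫_ℝ = 0 := by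
      rw [hw, inner_sub_right, real_inner_smul_right, real_inner_self_eq_norm_sq, hne,
        real_inner_comm]
      ring
    set y : ℝ := ‖w‖ with hy
    have hy0 : 0 ≤ y := norm_nonneg _
    set u : E2 := ‖w‖⁻¹ • w with hu
    have hnu : ‖u‖ ≤ 1 := by
      rcases eq_or_ne w 0 with h0 | h0
      · simp [hu, h0]
      · rw [hu, norm_smul, norm_inv, norm_norm, inv_mul_cancel₀ (norm_ne_zero_iff.2 h0)]
    have hwu : w = y • u := by
      rcases eq_or_ne w 0 with h0 | h0
      · simp [h0, hy, hu]
      · rw [hu, hy, smul_smul, mul_inv_cancel₀ (norm_ne_zero_iff.2 h0), one_smul]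
    have heu : ⟪e, u⟫_ℝ = 0 := by
      rw [hu, real_inner_smul_right, hwe, mul_zero]
    set t : ℝ := min y (s / Real.sqrt 3) with ht
    have ht0 : 0 ≤ t := le_min hy0 (by positivity)
    set p : E2 := o + t • u with hp
    clear_value v s e o x w y u t p
    have hu2 : ‖u‖^2 ≤ 1 := by nlinarith [norm_nonneg u]
    have hmul : ∀ z : ℝ, z^2 * ‖u‖^2 ≤ z^2 := by
      intro z
      nlinarith [sq_nonneg z, mul_nonneg (sq_nonneg z) (sub_nonneg.2 hu2)]
    -- basic position facts
    have hveq : v = (2 * s) • e := by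
      rw [he, smul_smul, hs]
      rw [show 2 * (‖v‖ / 2) * ‖v‖⁻¹ = ‖v‖ * ‖v‖⁻¹ by ring, mul_inv_cancel₀ hnv.ne', one_smul]
    have hoa : o - a = s • e := by
      rw [ho, midpoint_sub_left, ← hv, hveq, smul_smul]
      norm_num
      congr 1
      ring
    have hob : o - b = (-s) • e := by
      have h1 : o - b = (o - a) - v := by rw [hv]; abel
      rw [h1, hoa, hveq, ← sub_smul, show s - 2 * s = -s by ring]
    have hco : c - o = x • e + w := by rw [hw]; abel
    have hdab : dist a b = 2 * s := by
      rw [dist_eq_norm, show a - b = -v by rw [hv]; abel, norm_neg, hs]; ring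
    -- the constraint
    have hcon : (x + s)^2 + y^2 ≤ 4 * s^2 := by
      have hca' : c - a = (x + s) • e + w := by
        have h1 : c - a = (c - o) + (o - a) := by abel
        rw [h1, hco, hoa, add_smul]; abel
      have hsq : dist c a ^ 2 = (x+s)^2 + y^2 := by
        rw [dist_eq_norm, hca', norm_add_sq_real, real_inner_smul_left, hwe, norm_smul, hne,
          Real.norm_eq_abs, mul_one, sq_abs, ← hy]
        ring
      have h4 : dist c a ≤ 2 * s := by
        rw [dist_comm]; rw [hdab] at hac; exact hac
      have h5 : dist c a ^ 2 ≤ (2*s)^2 := pow_le_pow_left₀ dist_nonneg h4 2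
      rw [hsq] at h5
      have h6 : (2*s)^2 = 4*s^2 := by ring
      linarith
    obtain ⟨hb1, hb2⟩ := jung_alg (Real.sqrt 3) s x y h3 h3p hspos.le hy0 hx0 hcon
    rw [← ht] at hb1 hb2
    have htarget : (dist a b / Real.sqrt 3)^2 = 4 * s^2 / 3 := by
      rw [hdab, div_pow, h3]; ring
    have hMnn : 0 ≤ dist a b / Real.sqrt 3 := by positivity
    refine ⟨p, ?_, ?_, ?_⟩
    · have hpa : p - a = s • e + t • u := by rw [hp, ← hoa]; abel
      have hd2 : dist p a ^ 2 = s^2 + t^2 * ‖u‖^2 := by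
        rw [dist_eq_norm, hpa, norm_add_sq_real, real_inner_smul_left, real_inner_smul_right,
          heu, norm_smul, hne, norm_smul, Real.norm_eq_abs, Real.norm_eq_abs,
          abs_of_nonneg hspos.le, abs_of_nonneg ht0]
        ring
      apply le_of_sq_le_sq' dist_nonneg hMnn
      rw [hd2, htarget]
      linarith [hmul t, hb1]
    · have hpb : p - b = (-s) • e + t • u := by rw [hp, ← hob]; abel
      have hd2 : dist p b ^ 2 = s^2 + t^2 * ‖u‖^2 := by
        rw [dist_eq_norm, hpb, norm_add_sq_real, real_inner_smul_left, real_inner_smul_right,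
          heu, norm_smul, hne, norm_smul, Real.norm_eq_abs, Real.norm_eq_abs,
          abs_neg, abs_of_nonneg hspos.le, abs_of_nonneg ht0]
        ring
      apply le_of_sq_le_sq' dist_nonneg hMnn
      rw [hd2, htarget]
      linarith [hmul t, hb1]
    · have hpc : p - c = (-x) • e + (t - y) • u := by
        have h1 : p - c = -(c - o) + t • u := by rw [hp]; abel
        rw [h1, hco, hwu, neg_add, ← neg_smul, sub_smul]; abel
      have hd2 : dist p c ^ 2 = x^2 + (t - y)^2 * ‖u‖^2 := by
        rw [dist_eq_norm, hpc, norm_add_sq_real, real_inner_smul_left, real_inner_smul_right,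
          heu, norm_smul, hne, norm_smul, Real.norm_eq_abs, Real.norm_eq_abs,
          abs_neg, abs_of_nonneg hx0, mul_one, mul_pow, sq_abs]
        ring
      apply le_of_sq_le_sq' dist_nonneg hMnn
      rw [hd2, htarget]
      have hflip : (t - y)^2 = (y - t)^2 := by ring
      linarith [hmul (t - y), hb2]

lemma jung3side (a b c : E2) (hac : dist a c ≤ dist a b) (hbc : dist b c ≤ dist a b) :
    ∃ p : E2, dist p a ≤ dist a b / Real.sqrt 3 ∧ dist p b ≤ dist a b / Real.sqrt 3 ∧
      dist p c ≤ dist a b / Real.sqrt 3 := by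
  rcases le_total 0 ⟪c - midpoint ℝ a b, b - a⟫_ℝ with h | h
  · exact jung3max a b c hac hbc h
  · have hin : 0 ≤ ⟪c - midpoint ℝ b a, a - b⟫_ℝ := by
      rw [midpoint_comm, show a - b = -(b - a) by abel, inner_neg_right]
      linarith
    have hbc' : dist b c ≤ dist b a := by rwa [dist_comm b a]
    have hac' : dist a c ≤ dist b a := by rwa [dist_comm b a]
    obtain ⟨p, h1, h2, h3⟩ := jung3max b a c hbc' hac' hin
    rw [dist_comm b a] at h1 h2 h3
    exact ⟨p, h2, h1, h3⟩

lemma jung3 (d : ℝ) (a b c : E2)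
    (hab : dist a b ≤ d) (hac : dist a c ≤ d) (hbc : dist b c ≤ d) :
    ∃ p : E2, dist p a ≤ d / Real.sqrt 3 ∧ dist p b ≤ d / Real.sqrt 3 ∧
      dist p c ≤ d / Real.sqrt 3 := by
  have h3p : 0 < Real.sqrt 3 := Real.sqrt_pos.2 (by norm_num)
  have mono : ∀ m : ℝ, m ≤ d → m / Real.sqrt 3 ≤ d / Real.sqrt 3 := by
    intro m hm
    exact (div_le_div_iff_of_pos_right h3p).2 hm
  rcases le_total (dist a c) (dist a b) with h1 | h1
  · rcases le_total (dist b c) (dist a b) with h2 | h2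
    · obtain ⟨p, q1, q2, q3⟩ := jung3side a b c h1 h2
      exact ⟨p, q1.trans (mono _ hab), q2.trans (mono _ hab), q3.trans (mono _ hab)⟩
    · -- dist a b ≤ dist b c ; compare dist a c with dist b c
      have h4 : dist a c ≤ dist b c := h1.trans h2
      have h5 : dist b a ≤ dist b c := by rwa [dist_comm b a]
      have h6 : dist c a ≤ dist b c := by rwa [dist_comm c a]
      obtain ⟨p, q1, q2, q3⟩ := jung3side b c a h5 h6
      exact ⟨p, q3.trans (mono _ hbc), q1.trans (mono _ hbc), q2.trans (mono _ hbc)⟩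
  · rcases le_total (dist b c) (dist a c) with h2 | h2
    · -- dist a c is max
      have h5 : dist a b ≤ dist a c := h1
      have h6 : dist c b ≤ dist a c := by rwa [dist_comm c b]
      obtain ⟨p, q1, q2, q3⟩ := jung3side a c b h5 h6
      exact ⟨p, q1.trans (mono _ hac), q3.trans (mono _ hac), q2.trans (mono _ hac)⟩
    · -- dist b c is max
      have h5 : dist b a ≤ dist b c := by rw [dist_comm b a]; exact h1.trans h2
      have h6 : dist c a ≤ dist b c := by rwa [dist_comm c a]
      obtain ⟨p, q1, q2, q3⟩ := jung3side b c a h5 h6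
      exact ⟨p, q3.trans (mono _ hbc), q1.trans (mono _ hbc), q2.trans (mono _ hbc)⟩

set_option maxHeartbeats 1000000 in
/-- Lemma 1 of the paper: a disk-polygon with center parameter `d`, `1 ≤ d < √3`,
has inradius at least `1 - d/√3 = r(Δ(d))`. -/
theorem inradius_ge (d : ℝ) (hd1 : 1 ≤ d) (hd2 : d < Real.sqrt 3)
    (S : Finset E2) (hS : S.Nonempty) (D : Set E2)
    (hD : D = ⋂ c ∈ S, closedBall c 1) (hint : (interior D).Nonempty)
    (hcp : ∀ c ∈ S, ∀ c' ∈ S, dist c c' ≤ d) :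
    1 - d / Real.sqrt 3 ≤ inradius D := by
  classical
  have h3p : 0 < Real.sqrt 3 := Real.sqrt_pos.2 (by norm_num)
  have hd0 : 0 ≤ d := by linarith
  set r : ℝ := d / Real.sqrt 3 with hr
  have hr0 : 0 ≤ r := div_nonneg hd0 h3p.le
  have hr1 : r < 1 := by rw [hr, div_lt_one h3p]; exact hd2
  obtain ⟨c₀, hc₀⟩ := hS
  have hfin : Module.finrank ℝ E2 = 2 := finrank_euclideanSpace_fin
  -- every ≤3 balls of radius r intersect (Jung for 3 points)
  have hIH : ∀ I : Finset E2, I ⊆ S → I.card ≤ 3 →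
      (⋂ c ∈ I, closedBall c r).Nonempty := by
    intro I hIS hcard
    obtain ⟨a, b, c, ha, hb, hc, hcov⟩ :
        ∃ a b c : E2, a ∈ S ∧ b ∈ S ∧ c ∈ S ∧ ∀ i ∈ I, i = a ∨ i = b ∨ i = c := by
      have : I.card = 0 ∨ I.card = 1 ∨ I.card = 2 ∨ I.card = 3 := by omega
      rcases this with h | h | h | h
      · exact ⟨c₀, c₀, c₀, hc₀, hc₀, hc₀, by simp [Finset.card_eq_zero.1 h]⟩
      · obtain ⟨a, rfl⟩ := Finset.card_eq_one.1 h
        have ha : a ∈ S := hIS (by simp)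
        exact ⟨a, a, a, ha, ha, ha, by simp⟩
      · obtain ⟨a, b, _, rfl⟩ := Finset.card_eq_two.1 h
        have ha : a ∈ S := hIS (by simp)
        have hb : b ∈ S := hIS (by simp)
        refine ⟨a, b, b, ha, hb, hb, ?_⟩
        intro i hi
        rcases Finset.mem_insert.1 hi with h' | h'
        · exact Or.inl h'
        · exact Or.inr (Or.inl (Finset.mem_singleton.1 h'))
      · obtain ⟨a, b, c, _, _, _, rfl⟩ := Finset.card_eq_three.1 h
        have ha : a ∈ S := hIS (by simp)
        have hb : b ∈ S := hIS (by simp)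
        have hc : c ∈ S := hIS (by simp)
        refine ⟨a, b, c, ha, hb, hc, ?_⟩
        intro i hi
        simpa using hi
    obtain ⟨p, p1, p2, p3⟩ := jung3 d a b c (hcp a ha b hb) (hcp a ha c hc) (hcp b hb c hc)
    refine ⟨p, Set.mem_iInter₂.2 fun i hi => ?_⟩
    rcases hcov i hi with rfl | rfl | rfl
    · exact mem_closedBall.2 p1
    · exact mem_closedBall.2 p2
    · exact mem_closedBall.2 p3
  -- Helly
  have hne : (⋂ c ∈ S, closedBall c r).Nonempty := by
    apply Convex.helly_theorem' (𝕜 := ℝ) (fun c _ => convex_closedBall c r)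
    intro I hIS hIc
    rw [hfin] at hIc
    exact hIH I hIS hIc
  obtain ⟨q, hq⟩ := hne
  rw [Set.mem_iInter₂] at hq
  -- the inner ball
  have hsub : closedBall q (1 - r) ⊆ D := by
    rw [hD]
    intro z hz
    rw [Set.mem_iInter₂]
    intro c hc
    have h1 : dist z q ≤ 1 - r := mem_closedBall.1 hz
    have h2 : dist q c ≤ r := mem_closedBall.1 (hq c hc)
    exact mem_closedBall.2 ((dist_triangle z q c).trans (by linarith))
  -- bounded above
  have hbdd : BddAbove {ρ : ℝ | 0 ≤ ρ ∧ ∃ c : E2, closedBall c ρ ⊆ D} := by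
    refine ⟨2, fun ρ hρ => ?_⟩
    obtain ⟨hρ0, c, hcsub⟩ := hρ
    set u0 : E2 := EuclideanSpace.single (0 : Fin 2) (1 : ℝ) with hu0
    have hnu0 : ‖u0‖ = 1 := by simp [hu0]
    have hm1 : c + ρ • u0 ∈ closedBall c ρ := by
      rw [mem_closedBall, dist_eq_norm, add_sub_cancel_left, norm_smul, hnu0,
        Real.norm_eq_abs, abs_of_nonneg hρ0, mul_one]
    have hm2 : c ∈ closedBall c ρ := mem_closedBall_self hρ0
    have hD1 : D ⊆ closedBall c₀ 1 := by
      rw [hD]; exact Set.biInter_subset_of_mem hc₀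
    have e1 : dist (c + ρ • u0) c₀ ≤ 1 := mem_closedBall.1 (hD1 (hcsub hm1))
    have e2 : dist c c₀ ≤ 1 := mem_closedBall.1 (hD1 (hcsub hm2))
    have e3 : dist (c + ρ • u0) c = ρ := by
      rw [dist_eq_norm, add_sub_cancel_left, norm_smul, hnu0, Real.norm_eq_abs,
        abs_of_nonneg hρ0, mul_one]
    calc ρ = dist (c + ρ • u0) c := e3.symm
    _ ≤ dist (c + ρ • u0) c₀ + dist c₀ c := dist_triangle _ _ _
    _ ≤ 1 + 1 := add_le_add e1 (by rwa [dist_comm])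
    _ = 2 := by norm_num
  have hmem : (1 - r) ∈ {ρ : ℝ | 0 ≤ ρ ∧ ∃ c : E2, closedBall c ρ ⊆ D} :=
    ⟨by linarith, q, hsub⟩
  rw [show (1 : ℝ) - d / Real.sqrt 3 = 1 - r by rw [hr]]
  exact le_csSup hbdd hmem
end
end

section
/- For every disk-polygon D, the dual of the dual disk-polygon is D itself: (D*)* = D, i.e. {x : ∀ y, (∀ z ∈ D, dist(z, y) ≤ 1) → dist(x, y) ≤ 1} = D. -/
open Metric Real MeasureTheory
open scoped InnerProductSpace Pointwise ENNReal

noncomputable section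

section

variable {X : Type*} [PseudoMetricSpace X] {r : ℝ}

theorem subset_bidual (D : Set X) :
    D ⊆ {x | ∀ y, (∀ z ∈ D, dist z y ≤ r) → dist x y ≤ r} :=
  fun x hx _ hy => hy x hx

/-- Each center `c` lies in the dual of `⋂ c ∈ S, closedBall c r`. -/
theorem bidual_biInter_closedBall_subset (S : Set X) :
    {x | ∀ y, (∀ z ∈ ⋂ c ∈ S, closedBall c r, dist z y ≤ r) → dist x y ≤ r} ⊆
      ⋂ c ∈ S, closedBall c r :=
  fun _ hx => Set.mem_iInter₂.2 fun c hc => hx c fun _ hz => Set.mem_iInter₂.1 hz c hc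

theorem bidual_biInter_closedBall_eq (S : Set X) :
    {x | ∀ y, (∀ z ∈ ⋂ c ∈ S, closedBall c r, dist z y ≤ r) → dist x y ≤ r} =
      ⋂ c ∈ S, closedBall c r :=
  (bidual_biInter_closedBall_subset S).antisymm (subset_bidual _)

end

theorem dual_dual_eq_general (S : Finset E2) (D : Set E2)
    (hD : D = ⋂ c ∈ S, closedBall c 1) :
    {x : E2 | ∀ y : E2, (∀ z ∈ D, dist z y ≤ 1) → dist x y ≤ 1} = D := by
  subst hD
  exact bidual_biInter_closedBall_eq (S : Set E2)

/-- For every disk-polygon `D`, the dual of the dual disk-polygon is `D` itself. -/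
theorem dual_dual_eq (S : Finset E2) (hS : S.Nonempty) (D : Set E2)
    (hD : D = ⋂ c ∈ S, closedBall c 1) (hint : (interior D).Nonempty) :
    {x : E2 | ∀ y : E2, (∀ z ∈ D, dist z y ≤ 1) → dist x y ≤ 1} = D :=
  dual_dual_eq_general S D hD
end
end

section
/- For every disk-polygon D, the inradius of D and the circumradius of its dual D* satisfy r(D) + R(D*) = 1; moreover, the incircle of D and the circumcircle of D* can be taken concentric: there exists a point c with closedBall(c, r(D)) ⊆ D and D* ⊆ closedBall(c, R(D*)). -/
open Metric Real MeasureTheory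
open scoped InnerProductSpace Pointwise ENNReal

noncomputable section

/-
The dual `D*` contains every center of `D` and lies in the unit ball around any
point of `D`, so it is a nonempty bounded set with a smallest enclosing ball `closedBall c R`,
`R ≤ 1`. All centers lie in that ball, so `closedBall c (1 - R) ⊆ D` by the triangle inequality.
Conversely, if `closedBall c' r ⊆ D`, then every `y ∈ D*` has `closedBall c' r` inside its unit
ball, which forces `dist y c' ≤ 1 - r`; hence `R ≤ 1 - r`. So `1 - R` is the largest inradius.
-/

lemma Metric.exists_subset_closedBall_of_forall_lt {X : Type*} [PseudoMetricSpace X]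
    [ProperSpace X] {K : Set X} (hK : K.Nonempty) {R : ℝ}
    (h : ∀ r > R, ∃ c, K ⊆ closedBall c r) : ∃ c, K ⊆ closedBall c R := by
  obtain ⟨y₀, hy₀⟩ := hK
  let centers : Set.Ioi R → Set X := fun r => ⋂ y ∈ K, closedBall y r
  have hclosed (r : Set.Ioi R) : IsClosed (centers r) :=
    isClosed_biInter fun _ _ => isClosed_closedBall
  have hne : Nonempty (Set.Ioi R) := ⟨⟨R + 1, by simp⟩⟩
  obtain ⟨c, hc⟩ := IsCompact.nonempty_iInter_of_directed_nonempty_isCompact_isClosed centers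
    (Monotone.directed_ge fun _ _ hrs =>
      Set.iInter₂_mono fun _ _ => closedBall_subset_closedBall hrs)
    (fun r => (h r r.2).imp fun c hc =>
      Set.mem_iInter₂.2 fun y hy => mem_closedBall_comm.1 (hc hy))
    (fun r => (isCompact_closedBall y₀ r).of_isClosed_subset (hclosed r)
      (Set.biInter_subset_of_mem hy₀))
    hclosed
  refine ⟨c, fun y hy => mem_closedBall.2 <| le_of_forall_gt_imp_ge_of_dense fun r hr => ?_⟩
  exact mem_closedBall_comm.1 (Set.mem_iInter₂.1 (Set.mem_iInter.1 hc ⟨r, hr⟩) y hy)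

lemma add_dist_le_of_closedBall_subset_closedBall {E : Type*} [NormedAddCommGroup E]
    [NormedSpace ℝ E] [Nontrivial E] {c y : E} {r a : ℝ} (hr : 0 ≤ r)
    (h : closedBall c r ⊆ closedBall y a) : r + dist c y ≤ a := by
  obtain ⟨u, hu, hray⟩ : ∃ u : E, ‖u‖ = r ∧ SameRay ℝ (c - y) u := by
    rcases eq_or_ne (c - y) 0 with hcy | hcy
    · obtain ⟨u, hu⟩ := exists_norm_eq E hr
      exact ⟨u, hu, hcy ▸ SameRay.zero_left u⟩
    · exact ⟨(r / ‖c - y‖) • (c - y), by simp [norm_smul, abs_of_nonneg hr, hcy],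
        SameRay.sameRay_nonneg_smul_right _ (by positivity)⟩
  have hfar := h (show c + u ∈ closedBall c r by simp [hu])
  rw [mem_closedBall, dist_eq_norm, add_sub_right_comm, hray.norm_add, hu, ← dist_eq_norm] at hfar
  linarith

lemma circumradius_le {K : Set E2} (hK : K.Nonempty) {c : E2} {r : ℝ}
    (h : K ⊆ closedBall c r) : circumradius K ≤ r := by
  obtain ⟨y, hy⟩ := hK
  exact csInf_le ⟨0, fun _ hs => hs.1⟩ ⟨dist_nonneg.trans (h hy), c, h⟩

lemma exists_subset_closedBall_circumradius {K : Set E2} (hK : K.Nonempty)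
    (hb : Bornology.IsBounded K) : ∃ c, K ⊆ closedBall c (circumradius K) := by
  refine exists_subset_closedBall_of_forall_lt hK fun r hr => ?_
  obtain ⟨r₀, hr₀⟩ := hb.subset_closedBall hK.some
  have hradii : {r : ℝ | 0 ≤ r ∧ ∃ c : E2, K ⊆ closedBall c r}.Nonempty :=
    ⟨r₀, dist_nonneg.trans (hr₀ hK.some_mem), _, hr₀⟩
  obtain ⟨s, ⟨-, c, hc⟩, hsr⟩ := exists_lt_of_csInf_lt hradii hr
  exact ⟨c, hc.trans (closedBall_subset_closedBall hsr.le)⟩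

lemma dualDP_subset_closedBall_one_sub {D : Set E2} {c : E2} {r : ℝ} (hr : 0 ≤ r)
    (h : closedBall c r ⊆ D) : dualDP D ⊆ closedBall c (1 - r) := fun y hy => by
  have := add_dist_le_of_closedBall_subset_closedBall hr
    (h.trans fun x hx => mem_closedBall.2 (hy x hx))
  rw [mem_closedBall, dist_comm]
  linarith

lemma subset_dualDP_biInter_closedBall (S : Set E2) :
    S ⊆ dualDP (⋂ s ∈ S, closedBall s 1) :=
  fun s hs _ hx => mem_closedBall.1 (Set.mem_iInter₂.1 hx s hs)

lemma Metric.closedBall_sub_subset_biInter_closedBall {X : Type*} [PseudoMetricSpace X]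
    {S : Set X} {c : X} {R ρ : ℝ} (h : S ⊆ closedBall c R) :
    closedBall c (ρ - R) ⊆ ⋂ s ∈ S, closedBall s ρ :=
  Set.subset_iInter₂ fun s hs =>
    closedBall_subset_closedBall' (by rw [dist_comm]; linarith [mem_closedBall.1 (h hs)])

/-- Sublemma 1 of the paper: for a disk-polygon `D`, the inradius of `D` and the
circumradius of its dual `D*` sum to `1`; moreover the incircle and circumcircle
can be taken concentric. -/
theorem inradius_add_circumradius_dual (S : Finset E2) (hS : S.Nonempty) (D : Set E2)
    (hD : D = ⋂ c ∈ S, closedBall c 1) (hint : (interior D).Nonempty) :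
    inradius D + circumradius (dualDP D) = 1 ∧
    ∃ c : E2, closedBall c (inradius D) ⊆ D ∧
      dualDP D ⊆ closedBall c (circumradius (dualDP D)) := by
  obtain ⟨p, hp⟩ := hint
  have hSD : (S : Set E2) ⊆ dualDP D := hD ▸ subset_dualDP_biInter_closedBall S
  have hne : (dualDP D).Nonempty := (Finset.coe_nonempty.2 hS).mono hSD
  have hball : dualDP D ⊆ closedBall p 1 := fun y hy =>
    mem_closedBall_comm.1 (hy p (interior_subset hp))
  obtain ⟨c, hc⟩ :=
    exists_subset_closedBall_circumradius hne (isBounded_closedBall.subset hball)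
  set R := circumradius (dualDP D)
  have hin : closedBall c (1 - R) ⊆ D :=
    hD ▸ closedBall_sub_subset_biInter_closedBall (hSD.trans hc)
  have hgreatest : IsGreatest {r | 0 ≤ r ∧ ∃ c, closedBall c r ⊆ D} (1 - R) :=
    ⟨⟨sub_nonneg.2 (circumradius_le hne hball), c, hin⟩, fun r ⟨hr, _, hr'⟩ => by
      linarith [circumradius_le hne (dualDP_subset_closedBall_one_sub hr hr')]⟩
  have hinradius : inradius D = 1 - R := hgreatest.csSup_eq
  exact ⟨by rw [hinradius]; ring, c, hinradius ▸ hin, hc⟩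
end
end

section
/- Let D be a disk-polygon with center parameter d, where 1 ≤ d < √3. Then the circumradius of the dual disk-polygon satisfies R(D*) ≤ d/√3. -/
open Metric Real MeasureTheory
open scoped InnerProductSpace Pointwise ENNReal

noncomputable section

/-! Jung's theorem in the plane does the work. The centre `o` of the minimal ball `B(o, r)`
enclosing the centres lies in the convex hull of the centres at distance exactly `r` (otherwise
moving `o` towards them would shrink the ball), so by Carathéodory `o = ∑ wᵢ zᵢ` for at most three
such centres. Then `∑ⱼ wⱼ ‖zᵢ - zⱼ‖² = 2r²` for each `i`, while the left side is at most
`(1 - wᵢ) d²`; summing over the `k ≤ 3` indices gives `2kr² ≤ (k - 1)d²`, so `r ≤ d/√3`.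
Consequently `D` contains `B(o, 1 - d/√3)`, and testing `y ∈ D*` against the point of this ball
farthest from `y` gives `‖y - o‖ + 1 - d/√3 ≤ 1`. -/

section Jung

open Filter Topology Module

variable {E : Type*} [NormedAddCommGroup E] [InnerProductSpace ℝ E]

lemma Finset.exists_minimal_enclosing_ball {α : Type*} [MetricSpace α] [ProperSpace α]
    (S : Finset α) (hS : S.Nonempty) :
    ∃ o r, (S : Set α) ⊆ closedBall o r ∧ ∀ x, ¬ (S : Set α) ⊆ ball x r := by
  obtain ⟨c₀, hc₀⟩ := hS
  have : Nonempty α := ⟨c₀⟩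
  have hfar : Continuous fun x => S.sup' ⟨c₀, hc₀⟩ (dist · x) :=
    Continuous.finset_sup'_apply _ fun c _ => continuous_const.dist continuous_id
  obtain ⟨o, ho⟩ := hfar.exists_forall_le <| tendsto_atTop_mono
    (fun x => Finset.le_sup' (dist · x) hc₀) (tendsto_dist_left_cocompact_atTop c₀)
  refine ⟨o, S.sup' ⟨c₀, hc₀⟩ (dist · o),
    fun c hc => mem_closedBall.2 (Finset.le_sup' (dist · o) hc), fun x hx => ?_⟩
  obtain ⟨c, hc, hcx⟩ := Finset.exists_mem_eq_sup' ⟨c₀, hc₀⟩ (dist · x)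
  exact ((ho x).trans_eq hcx).not_gt (hx hc)

lemma eventually_dist_add_smul_lt {o c v : E} {r : ℝ} (hc : dist c o ≤ r)
    (hv : dist c o = r → 0 < ⟪c - o, v⟫_ℝ) : ∀ᶠ t in 𝓝[>] (0 : ℝ), dist c (o + t • v) < r := by
  rcases hc.lt_or_eq with hlt | rfl
  · have hcont : Continuous fun t : ℝ => dist c (o + t • v) := by fun_prop
    have := hcont.tendsto 0
    simp only [zero_smul, add_zero] at this
    exact nhdsWithin_le_nhds (this.eventually (eventually_lt_nhds hlt))
  · have hpos := hv rfl
    have hsmall : ∀ᶠ t in 𝓝[>] (0 : ℝ), t * ‖v‖ ^ 2 < 2 * ⟪c - o, v⟫_ℝ := by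
      have : Continuous fun t : ℝ => t * ‖v‖ ^ 2 := by fun_prop
      have := this.tendsto 0
      simp only [zero_mul] at this
      exact nhdsWithin_le_nhds (this.eventually (eventually_lt_nhds (by linarith)))
    filter_upwards [hsmall, self_mem_nhdsWithin] with t ht (ht0 : 0 < t)
    have hexpand :
        dist c (o + t • v) ^ 2 = dist c o ^ 2 - t * (2 * ⟪c - o, v⟫_ℝ - t * ‖v‖ ^ 2) := by
      rw [dist_eq_norm, dist_eq_norm, show c - (o + t • v) = (c - o) - t • v by abel,
        norm_sub_sq_real, real_inner_smul_right, norm_smul, Real.norm_eq_abs, abs_of_pos ht0]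
      ring
    have : dist c (o + t • v) ^ 2 < dist c o ^ 2 := by nlinarith
    exact lt_of_pow_lt_pow_left₀ 2 dist_nonneg this

lemma exists_subset_ball_of_notMem_convexHull [CompleteSpace E] {S : Finset E} {o : E} {r : ℝ}
    (hS : (S : Set E) ⊆ closedBall o r)
    (ho : o ∉ convexHull ℝ {c ∈ (S : Set E) | dist c o = r}) :
    ∃ x, (S : Set E) ⊆ ball x r := by
  have hclosed : IsClosed (convexHull ℝ {c ∈ (S : Set E) | dist c o = r}) :=
    ((S.finite_toSet.subset (Set.sep_subset _ _)).isCompact_convexHull ℝ).isClosed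
  obtain ⟨f, u, hfo, hfT⟩ := geometric_hahn_banach_point_closed (convex_convexHull ℝ _) hclosed ho
  set v := (InnerProductSpace.toDual ℝ E).symm f
  have hv : ∀ c ∈ S, dist c o = r → 0 < ⟪c - o, v⟫_ℝ := fun c hc hcr => by
    rw [real_inner_comm, InnerProductSpace.toDual_symm_apply, map_sub]
    linarith [hfT c (subset_convexHull ℝ _ ⟨hc, hcr⟩)]
  obtain ⟨t, ht⟩ := ((eventually_all_finset S).2 fun c hc =>
    eventually_dist_add_smul_lt (hS hc) (hv c hc)).exists
  exact ⟨o + t • v, ht⟩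

section Weighted

variable {ι : Type*} [Fintype ι] {z : ι → E} {w : ι → ℝ} {o : E} {r d : ℝ}

lemma sum_mul_dist_sq_eq_of_sum_smul_eq (hw1 : ∑ j, w j = 1) (hwz : ∑ j, w j • z j = o)
    (hr : ∀ j, dist (z j) o = r) (i : ι) : ∑ j, w j * dist (z i) (z j) ^ 2 = 2 * r ^ 2 := by
  have hcentered : ∑ j, w j • (z j - o) = 0 := by
    simp only [smul_sub, Finset.sum_sub_distrib, ← Finset.sum_smul, hw1, one_smul, hwz, sub_self]
  have hexpand : ∀ j, dist (z i) (z j) ^ 2 = 2 * r ^ 2 - 2 * ⟪z i - o, z j - o⟫_ℝ := fun j => by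
    rw [dist_eq_norm, show z i - z j = (z i - o) - (z j - o) by abel, norm_sub_sq_real,
      ← dist_eq_norm, ← dist_eq_norm, hr, hr]
    ring
  calc ∑ j, w j * dist (z i) (z j) ^ 2
      = 2 * r ^ 2 * ∑ j, w j - 2 * ⟪z i - o, ∑ j, w j • (z j - o)⟫_ℝ := by
        rw [inner_sum, Finset.mul_sum, Finset.mul_sum, ← Finset.sum_sub_distrib]
        refine Finset.sum_congr rfl fun j _ => ?_
        rw [hexpand, real_inner_smul_right]
        ring
    _ = 2 * r ^ 2 := by rw [hw1, hcentered, inner_zero_right]; ring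

lemma two_mul_card_mul_sq_le (hw0 : ∀ j, 0 ≤ w j) (hw1 : ∑ j, w j = 1)
    (hwz : ∑ j, w j • z j = o) (hr : ∀ j, dist (z j) o = r) (hd : ∀ i j, dist (z i) (z j) ≤ d) :
    2 * Fintype.card ι * r ^ 2 ≤ (Fintype.card ι - 1) * d ^ 2 := by
  classical
  have hpoint : ∀ i, 2 * r ^ 2 ≤ (1 - w i) * d ^ 2 := fun i => calc
    2 * r ^ 2 = ∑ j ∈ Finset.univ.erase i, w j * dist (z i) (z j) ^ 2 := by
      rw [← sum_mul_dist_sq_eq_of_sum_smul_eq hw1 hwz hr i,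
        ← Finset.sum_erase_add _ _ (Finset.mem_univ i), dist_self]
      ring
    _ ≤ ∑ j ∈ Finset.univ.erase i, w j * d ^ 2 := Finset.sum_le_sum fun j _ =>
      mul_le_mul_of_nonneg_left (pow_le_pow_left₀ dist_nonneg (hd i j) 2) (hw0 j)
    _ = (1 - w i) * d ^ 2 := by
      rw [← Finset.sum_mul, Finset.sum_erase_eq_sub (Finset.mem_univ i), hw1]
  calc 2 * Fintype.card ι * r ^ 2 = ∑ _i : ι, 2 * r ^ 2 := by
        rw [Finset.sum_const, Finset.card_univ, nsmul_eq_mul]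
        ring
    _ ≤ ∑ i, (1 - w i) * d ^ 2 := Finset.sum_le_sum fun i _ => hpoint i
    _ = (Fintype.card ι - 1) * d ^ 2 := by
      rw [← Finset.sum_mul, Finset.sum_sub_distrib, hw1, Finset.sum_const, Finset.card_univ,
        nsmul_eq_mul, mul_one]

end Weighted

theorem exists_forall_two_mul_finrank_succ_mul_dist_sq_le [FiniteDimensional ℝ E]
    {S : Finset E} (hS : S.Nonempty) {d : ℝ} (hd : ∀ c ∈ S, ∀ c' ∈ S, dist c c' ≤ d) :
    ∃ o, ∀ c ∈ S, 2 * (finrank ℝ E + 1) * dist c o ^ 2 ≤ finrank ℝ E * d ^ 2 := by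
  obtain ⟨o, r, hSo, hmin⟩ := S.exists_minimal_enclosing_ball hS
  have hhull : o ∈ convexHull ℝ {c ∈ (S : Set E) | dist c o = r} := by
    by_contra ho
    obtain ⟨x, hx⟩ := exists_subset_ball_of_notMem_convexHull hSo ho
    exact hmin x hx
  obtain ⟨ι, _, z, w, hzT, haff, hw0, hw1, hwz⟩ := eq_pos_convex_span_of_mem_convexHull hhull
  have hzS : ∀ i, z i ∈ S ∧ dist (z i) o = r := fun i => hzT (Set.mem_range_self i)
  have hk : Fintype.card ι ≤ finrank ℝ E + 1 :=
    haff.card_le_finrank_succ.trans (Nat.add_le_add_right (Submodule.finrank_le _) 1)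
  have hk0 : 0 < Fintype.card ι :=
    Finset.card_pos.2 (Finset.nonempty_of_sum_ne_zero (hw1 ▸ one_ne_zero : ∑ i, w i ≠ 0))
  have hr := two_mul_card_mul_sq_le (fun i => (hw0 i).le) hw1 hwz (fun i => (hzS i).2)
    fun i j => hd _ (hzS i).1 _ (hzS j).1
  have hrd : 2 * (finrank ℝ E + 1) * r ^ 2 ≤ finrank ℝ E * d ^ 2 := by
    have hk' : (Fintype.card ι : ℝ) ≤ finrank ℝ E + 1 := by exact_mod_cast hk
    have hk0' : (0 : ℝ) < Fintype.card ι := by exact_mod_cast hk0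
    refine le_of_mul_le_mul_left ?_ hk0'
    nlinarith [sq_nonneg d]
  refine ⟨o, fun c hc => hrd.trans' ?_⟩
  have hco : dist c o ≤ r := mem_closedBall.1 (hSo hc)
  gcongr

theorem exists_forall_dist_le_div_sqrt_three [FiniteDimensional ℝ E] (hE : finrank ℝ E = 2)
    {S : Finset E} (hS : S.Nonempty) {d : ℝ} (hd : ∀ c ∈ S, ∀ c' ∈ S, dist c c' ≤ d) :
    ∃ o, ∀ c ∈ S, dist c o ≤ d / √3 := by
  obtain ⟨o, ho⟩ := exists_forall_two_mul_finrank_succ_mul_dist_sq_le hS hd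
  obtain ⟨c₀, hc₀⟩ := hS
  have hd0 : 0 ≤ d := dist_nonneg.trans (hd c₀ hc₀ c₀ hc₀)
  refine ⟨o, fun c hc => (le_div_iff₀ (by positivity)).2 ?_⟩
  have hsq := ho c hc
  rw [hE] at hsq
  refine (pow_le_pow_iff_left₀ (by positivity) hd0 two_ne_zero).1 ?_
  rw [mul_pow, Real.sq_sqrt zero_le_three]
  push_cast at hsq
  linarith

end Jung

lemma dualDP_subset_closedBall {D : Set E2} {o : E2} {ρ : ℝ} (hρ0 : 0 ≤ ρ) (hρ1 : ρ ≤ 1)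
    (hD : closedBall o (1 - ρ) ⊆ D) : dualDP D ⊆ closedBall o ρ := by
  intro y hy
  rw [mem_closedBall]
  rcases eq_or_ne y o with rfl | hyo
  · rwa [dist_self]
  have hn : 0 < dist y o := dist_pos.2 hyo
  set x := AffineMap.lineMap y o (1 + (1 - ρ) / dist y o)
  have hxo : dist x o = 1 - ρ := by
    rw [dist_lineMap_right, sub_add_cancel_left, norm_neg, Real.norm_of_nonneg (by positivity),
      div_mul_cancel₀ _ hn.ne']
  have hxy : dist x y = dist y o + (1 - ρ) := by
    rw [dist_lineMap_left, Real.norm_of_nonneg (by positivity), add_mul,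
      div_mul_cancel₀ _ hn.ne', one_mul]
  have := hy x (hD (mem_closedBall.2 hxo.le))
  rw [dist_comm, ← dist_comm x, hxy] at this
  linarith

lemma circumradius_le_of_subset_closedBall {C : Set E2} {c : E2} {r : ℝ} (hr : 0 ≤ r)
    (hC : C ⊆ closedBall c r) : circumradius C ≤ r :=
  csInf_le ⟨0, fun _ h => h.1⟩ ⟨hr, c, hC⟩

theorem circumradius_dual_le_general (d : ℝ) (hd2 : d < Real.sqrt 3)
    (S : Finset E2) (hS : S.Nonempty) (D : Set E2)
    (hD : D = ⋂ c ∈ S, closedBall c 1)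
    (hcp : ∀ c ∈ S, ∀ c' ∈ S, dist c c' ≤ d) :
    circumradius (dualDP D) ≤ d / Real.sqrt 3 := by
  obtain ⟨o, ho⟩ := exists_forall_dist_le_div_sqrt_three finrank_euclideanSpace_fin hS hcp
  obtain ⟨c₀, hc₀⟩ := hS
  have hρ0 : 0 ≤ d / √3 := dist_nonneg.trans (ho c₀ hc₀)
  have hρ1 : d / √3 ≤ 1 := ((div_lt_one (by positivity)).2 hd2).le
  have hball : closedBall o (1 - d / √3) ⊆ D := hD ▸ Set.subset_iInter₂ fun c hc =>
    closedBall_subset_closedBall' (by rw [dist_comm]; linarith [ho c hc])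
  exact circumradius_le_of_subset_closedBall hρ0 (dualDP_subset_closedBall hρ0 hρ1 hball)

/-- For a disk-polygon with center parameter `d`, `1 ≤ d < √3`, the circumradius
of the dual disk-polygon is at most `d/√3`. -/
theorem circumradius_dual_le (d : ℝ) (hd1 : 1 ≤ d) (hd2 : d < Real.sqrt 3)
    (S : Finset E2) (hS : S.Nonempty) (D : Set E2)
    (hD : D = ⋂ c ∈ S, closedBall c 1) (hint : (interior D).Nonempty)
    (hcp : ∀ c ∈ S, ∀ c' ∈ S, dist c c' ≤ d) :
    circumradius (dualDP D) ≤ d / Real.sqrt 3 :=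
  circumradius_dual_le_general d hd2 S hS D hD hcp
end
end

section
/- For every disk-polygon D, the Minkowski sum D + D* of D and its dual disk-polygon D* is a convex domain of constant width 2: for every unit vector u, sup{⟪x − y, u⟫ : x, y ∈ D + D*} = 2. -/
/-! If `x₀` maximises `⟪·, u⟫` on an intersection `K` of unit balls, then `K` lies in the unit
ball about `x₀ - u`. Indeed, for `z ∈ K` and `0 < t < 1` the squared distance to each center is
`t (1 - t) ‖z - x₀‖²` below its bound at `x₀ + t (z - x₀)`, so that point can still be moved by
`t (1 - t) ‖z - x₀‖² / 2` in direction `u` inside `K`; maximality then gives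
`⟪z - x₀, u⟫ ≤ -(1 - t) ‖z - x₀‖² / 2`, and `t → 0` yields `‖z - (x₀ - u)‖ ≤ 1`.

`D` is cut out by the centers `S` and `D*` by the points of `D`, and `S ⊆ D*`. So the lemma
gives `x₀ ∈ D` with `x₀ - u ∈ D*` and `y₀ ∈ D*` with `y₀ - u ∈ D`, and the two points
`x₀ + y₀`, `(y₀ - u) + (x₀ - u)` of `D + D*` differ by `2u`. Conversely, a difference of two
points of `D + D*` is the sum of two vectors of length at most `1`.
-/

open Metric Real MeasureTheory
open scoped InnerProductSpace Pointwise ENNReal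

noncomputable section

open Filter Topology

section InnerProductSpace

variable {E : Type*} [NormedAddCommGroup E] [InnerProductSpace ℝ E]

theorem norm_add_smul_sub_sq (a b : E) (t : ℝ) :
    ‖a + t • (b - a)‖ ^ 2 = (1 - t) * ‖a‖ ^ 2 + t * ‖b‖ ^ 2 - t * (1 - t) * ‖b - a‖ ^ 2 := by
  have hba := norm_sub_sq_real b a
  rw [norm_add_sq_real, inner_smul_right, norm_smul, mul_pow, Real.norm_eq_abs, sq_abs,
    inner_sub_right, real_inner_self_eq_norm_sq, hba, real_inner_comm]
  ring

theorem norm_add_smul_sub_le {a b : E} {t : ℝ} (ha : ‖a‖ ≤ 1) (hb : ‖b‖ ≤ 1)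
    (ht₀ : 0 ≤ t) (ht₁ : t ≤ 1) :
    ‖a + t • (b - a)‖ ≤ 1 - t * (1 - t) * ‖b - a‖ ^ 2 / 2 := by
  have hδ : 0 ≤ t * (1 - t) * ‖b - a‖ ^ 2 / 2 := by
    have : 0 ≤ 1 - t := by linarith
    positivity
  have hsq : ‖a + t • (b - a)‖ ^ 2 ≤ 1 - 2 * (t * (1 - t) * ‖b - a‖ ^ 2 / 2) := by
    rw [norm_add_smul_sub_sq]
    nlinarith [mul_le_mul_of_nonneg_left (pow_le_one₀ (n := 2) (norm_nonneg a) ha)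
        (sub_nonneg.mpr ht₁),
      mul_le_mul_of_nonneg_left (pow_le_one₀ (n := 2) (norm_nonneg b) hb) ht₀]
  have hδ₁ : 0 ≤ 1 - t * (1 - t) * ‖b - a‖ ^ 2 / 2 := by
    nlinarith [sq_nonneg ‖a + t • (b - a)‖]
  refine (pow_le_pow_iff_left₀ (norm_nonneg _) hδ₁ two_ne_zero).mp ?_
  nlinarith

theorem add_smul_add_smul_mem_biInter_closedBall {T : Set E} {x z u : E}
    (hx : x ∈ ⋂ c ∈ T, closedBall c 1) (hz : z ∈ ⋂ c ∈ T, closedBall c 1) (hu : ‖u‖ ≤ 1)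
    {t : ℝ} (ht₀ : 0 ≤ t) (ht₁ : t ≤ 1) :
    x + t • (z - x) + (t * (1 - t) * ‖z - x‖ ^ 2 / 2) • u ∈ ⋂ c ∈ T, closedBall c 1 := by
  simp only [Set.mem_iInter, mem_closedBall, dist_eq_norm] at hx hz ⊢
  intro c hc
  have hδ : 0 ≤ t * (1 - t) * ‖z - x‖ ^ 2 / 2 := by
    have : 0 ≤ 1 - t := by linarith
    positivity
  calc ‖x + t • (z - x) + (t * (1 - t) * ‖z - x‖ ^ 2 / 2) • u - c‖
      = ‖(x + t • (z - x) - c) + (t * (1 - t) * ‖z - x‖ ^ 2 / 2) • u‖ := by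
        rw [add_sub_right_comm]
    _ ≤ ‖x + t • (z - x) - c‖ + t * (1 - t) * ‖z - x‖ ^ 2 / 2 * ‖u‖ := by
      grw [norm_add_le, norm_smul, Real.norm_of_nonneg hδ]
    _ ≤ 1 := by
      have hnear := norm_add_smul_sub_le (hx c hc) (hz c hc) ht₀ ht₁
      rw [sub_sub_sub_cancel_right, ← add_sub_right_comm] at hnear
      grw [hnear, hu]
      linarith

theorem inner_sub_le_of_isMaxOn_biInter_closedBall {T : Set E} {x₀ z u : E} (hu : ‖u‖ = 1)
    (hx₀ : x₀ ∈ ⋂ c ∈ T, closedBall c 1)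
    (hmax : IsMaxOn (fun x ↦ ⟪x, u⟫_ℝ) (⋂ c ∈ T, closedBall c 1) x₀)
    (hz : z ∈ ⋂ c ∈ T, closedBall c 1) :
    ⟪z - x₀, u⟫_ℝ ≤ -(‖z - x₀‖ ^ 2 / 2) := by
  have hchord : ∀ t ∈ Set.Ioo (0 : ℝ) 1, ⟪z - x₀, u⟫_ℝ ≤ -((1 - t) * ‖z - x₀‖ ^ 2 / 2) := by
    rintro t ⟨ht₀, ht₁⟩
    have hle : ⟪x₀ + t • (z - x₀) + (t * (1 - t) * ‖z - x₀‖ ^ 2 / 2) • u, u⟫_ℝ ≤ ⟪x₀, u⟫_ℝ :=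
      hmax (add_smul_add_smul_mem_biInter_closedBall hx₀ hz hu.le ht₀.le ht₁.le)
    simp only [inner_add_left, real_inner_smul_left, real_inner_self_eq_norm_sq, hu] at hle
    have : t * (⟪z - x₀, u⟫_ℝ + (1 - t) * ‖z - x₀‖ ^ 2 / 2) ≤ 0 := by linarith
    linarith [nonpos_of_mul_nonpos_right this ht₀]
  have hlim : Tendsto (fun t : ℝ ↦ -((1 - t) * ‖z - x₀‖ ^ 2 / 2)) (𝓝[>] 0)
      (𝓝 (-(‖z - x₀‖ ^ 2 / 2))) := by
    have hcont : Continuous fun t : ℝ ↦ -((1 - t) * ‖z - x₀‖ ^ 2 / 2) := by fun_prop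
    simpa using (hcont.tendsto 0).mono_left nhdsWithin_le_nhds
  exact ge_of_tendsto hlim (eventually_of_mem (Ioo_mem_nhdsGT one_pos) hchord)

theorem biInter_closedBall_subset_closedBall_sub_of_isMaxOn {T : Set E} {x₀ u : E}
    (hu : ‖u‖ = 1) (hx₀ : x₀ ∈ ⋂ c ∈ T, closedBall c 1)
    (hmax : IsMaxOn (fun x ↦ ⟪x, u⟫_ℝ) (⋂ c ∈ T, closedBall c 1) x₀) :
    ⋂ c ∈ T, closedBall c 1 ⊆ closedBall (x₀ - u) 1 := by
  intro z hz
  have hdrop := inner_sub_le_of_isMaxOn_biInter_closedBall hu hx₀ hmax hz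
  rw [mem_closedBall, dist_eq_norm, sub_sub_eq_add_sub, add_sub_right_comm,
    ← sq_le_one_iff₀ (norm_nonneg _), norm_add_sq_real, hu]
  linarith

theorem exists_mem_biInter_closedBall_subset_closedBall_sub [ProperSpace E] {T : Set E}
    (hT : T.Nonempty) (hK : (⋂ c ∈ T, closedBall c (1 : ℝ)).Nonempty) {u : E} (hu : ‖u‖ = 1) :
    ∃ x ∈ ⋂ c ∈ T, closedBall c (1 : ℝ), ⋂ c ∈ T, closedBall c 1 ⊆ closedBall (x - u) 1 := by
  obtain ⟨c, hc⟩ := hT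
  have hK_compact : IsCompact (⋂ c ∈ T, closedBall c (1 : ℝ)) :=
    (isCompact_closedBall c 1).of_isClosed_subset
      (isClosed_biInter fun _ _ ↦ isClosed_closedBall) (Set.biInter_subset_of_mem hc)
  obtain ⟨x₀, hx₀, hmax⟩ :=
    hK_compact.exists_isMaxOn hK
      (continuous_id.inner continuous_const : Continuous fun x : E ↦ ⟪x, u⟫_ℝ).continuousOn
  exact ⟨x₀, hx₀, biInter_closedBall_subset_closedBall_sub_of_isMaxOn hu hx₀ hmax⟩

end InnerProductSpace

theorem dualDP_eq_biInter_closedBall (A : Set E2) : dualDP A = ⋂ x ∈ A, closedBall x 1 := by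
  ext y
  simp only [dualDP, Set.mem_ofPred_eq, Set.mem_iInter, mem_closedBall, dist_comm]

theorem inner_sub_le_two_of_mem_add_dualDP {A : Set E2} {u x y : E2} (hu : ‖u‖ ≤ 1)
    (hx : x ∈ A + dualDP A) (hy : y ∈ A + dualDP A) : ⟪x - y, u⟫_ℝ ≤ 2 := by
  obtain ⟨a, ha, b, hb, rfl⟩ := hx
  obtain ⟨a', ha', b', hb', rfl⟩ := hy
  have hle : ∀ v w : E2, dist v w ≤ 1 → ⟪v - w, u⟫_ℝ ≤ 1 := fun v w hvw ↦
    calc ⟪v - w, u⟫_ℝ ≤ ‖v - w‖ * ‖u‖ := real_inner_le_norm _ _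
      _ ≤ 1 := by rw [← dist_eq_norm]; exact mul_le_one₀ hvw (norm_nonneg u) hu
  calc ⟪a + b - (a' + b'), u⟫_ℝ = ⟪a - b', u⟫_ℝ + ⟪b - a', u⟫_ℝ := by
        rw [← inner_add_left]; abel_nf
    _ ≤ 1 + 1 := add_le_add (hle _ _ (hb' a ha)) (hle _ _ (dist_comm a' b ▸ hb a' ha'))
    _ = 2 := one_add_one_eq_two

theorem dirWidth_add_dualDP_eq_two {A : Set E2} {u x y : E2} (hu : ‖u‖ = 1)
    (hx : x ∈ A) (hxu : x - u ∈ dualDP A) (hy : y ∈ dualDP A) (hyu : y - u ∈ A) :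
    dirWidth (A + dualDP A) u = 2 := by
  refine IsGreatest.csSup_eq ⟨⟨x + y, Set.add_mem_add hx hy, (y - u) + (x - u),
    Set.add_mem_add hyu hxu, ?_⟩, ?_⟩
  · rw [show x + y - (y - u + (x - u)) = u + u by abel, inner_add_left,
      real_inner_self_eq_norm_sq, hu]
    norm_num
  · rintro _ ⟨x', hx', y', hy', rfl⟩
    exact inner_sub_le_two_of_mem_add_dualDP hu.le hx' hy'

/-- Sublemma 2 of the paper: for every disk-polygon `D`, the Minkowski sum of `D`
and its dual `D*` is a convex domain of constant width `2`. -/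
theorem minkowski_sum_dual_constant_width (S : Finset E2) (hS : S.Nonempty) (D : Set E2)
    (hD : D = ⋂ c ∈ S, closedBall c 1) (hint : (interior D).Nonempty) :
    ∀ u : E2, ‖u‖ = 1 → dirWidth (D + dualDP D) u = 2 := by
  intro u hu
  have hDS : D = ⋂ c ∈ (S : Set E2), closedBall c 1 := by simpa only [Finset.mem_coe] using hD
  have hDne : D.Nonempty := hint.mono interior_subset
  obtain ⟨x₀, hx₀, hDx₀⟩ := exists_mem_biInter_closedBall_subset_closedBall_sub
    (T := (S : Set E2)) hS (hDS ▸ hDne) hu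
  have hSdual : (S : Set E2) ⊆ dualDP D := fun c hc x hx ↦
    Set.mem_iInter₂.mp (hDS ▸ hx) c hc
  obtain ⟨y₀, hy₀, hDy₀⟩ := exists_mem_biInter_closedBall_subset_closedBall_sub
    (T := D) hDne (dualDP_eq_biInter_closedBall D ▸ hS.to_set.mono hSdual) hu
  rw [← dualDP_eq_biInter_closedBall] at hy₀ hDy₀
  refine dirWidth_add_dualDP_eq_two hu (hDS ▸ hx₀) (fun x hx ↦ hDx₀ (hDS ▸ hx)) hy₀ ?_
  rw [hDS]
  exact Set.mem_iInter₂.mpr fun c hc ↦ mem_closedBall_comm.mp (hDy₀ (hSdual hc))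
end
end

section
/- For every disk-polygon D, the minimal width of D plus the diameter of its dual equals 2, and the minimal width of the dual plus the diameter of D equals 2: w(D) + diam(D*) = 2 and w(D*) + diam(D) = 2. -/
/-!
Fix a unit vector `u` and let `x₀` minimize `⟪·, u⟫` on `D`. A unit disk containing two points
contains the short arcs of unit circles joining them, so `D` contains such arcs from `x₀` to every
`z ∈ D`; minimality of `x₀` on them forces their tangents at `x₀` into the half-plane
`⟪·, u⟫ ≥ 0`, and choosing the arc well this says exactly `dist z (x₀ + u) ≤ 1`. So `x₀ + u ∈ D*`,
and as every point of `D*` is within `1` of `x₀`, it maximizes `⟪·, u⟫` on `D*`. With the same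
for `-u` this gives `w_u(D) + w_u(D*) = 2` in every direction, and the theorem follows because the
minimal width is the infimum and the diameter the supremum of the directional widths.
-/

open Metric Real MeasureTheory
open scoped InnerProductSpace Pointwise ENNReal

noncomputable section

open Filter

section InnerProductSpace

variable {V : Type*} [NormedAddCommGroup V] [InnerProductSpace ℝ V]

lemma inner_sub_le_dist (x y : V) {u : V} (hu : ‖u‖ = 1) : ⟪x - y, u⟫_ℝ ≤ dist x y := by
  simpa [hu, dist_eq_norm] using real_inner_le_norm (x - y) u

lemma dist_add_le_one_iff {c y v : V} (hv : ‖v‖ = 1) :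
    dist y (c + v) ≤ 1 ↔ ‖y - c‖ ^ 2 ≤ 2 * ⟪y - c, v⟫_ℝ := by
  have h : dist y (c + v) ^ 2 = ‖y - c‖ ^ 2 - 2 * ⟪y - c, v⟫_ℝ + 1 := by
    rw [dist_eq_norm, show y - (c + v) = (y - c) - v by abel, norm_sub_sq_real, hv]
    ring
  rw [← sq_le_one_iff₀ dist_nonneg, h]
  constructor <;> intro <;> linarith

/-- Every unit disk containing `c + v₁` and `c + v₂` contains the short arc between them of the
unit circle around `c`. -/
lemma dist_add_arc_le_one {c y v₁ v₂ : V} {a b : ℝ} (ha : 0 ≤ a) (hb : 0 ≤ b)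
    (hv₁ : ‖v₁‖ = 1) (hv₂ : ‖v₂‖ = 1) (hv : ‖a • v₁ + b • v₂‖ = 1)
    (h₁ : dist y (c + v₁) ≤ 1) (h₂ : dist y (c + v₂) ≤ 1) :
    dist y (c + (a • v₁ + b • v₂)) ≤ 1 := by
  rw [dist_add_le_one_iff hv₁] at h₁
  rw [dist_add_le_one_iff hv₂] at h₂
  rw [dist_add_le_one_iff hv, inner_add_right, real_inner_smul_right, real_inner_smul_right]
  have hab : 1 ≤ a + b :=
    calc (1 : ℝ) = ‖a • v₁ + b • v₂‖ := hv.symm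
      _ ≤ ‖a • v₁‖ + ‖b • v₂‖ := norm_add_le _ _
      _ = a + b := by rw [norm_smul, norm_smul, hv₁, hv₂, Real.norm_of_nonneg ha,
          Real.norm_of_nonneg hb, mul_one, mul_one]
  nlinarith [mul_le_mul_of_nonneg_left h₁ ha, mul_le_mul_of_nonneg_left h₂ hb, sq_nonneg ‖y - c‖]

/-- `K` contains, with any two of its points on a unit circle, the short arc of that circle
joining them. -/
def IsSpindleConvex (K : Set V) : Prop :=
  ∀ ⦃c v₁ v₂ : V⦄ ⦃a b : ℝ⦄, 0 ≤ a → 0 ≤ b → ‖v₁‖ = 1 → ‖v₂‖ = 1 → ‖a • v₁ + b • v₂‖ = 1 →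
    c + v₁ ∈ K → c + v₂ ∈ K → c + (a • v₁ + b • v₂) ∈ K

lemma isSpindleConvex_iInter_closedBall (S : Set V) :
    IsSpindleConvex (⋂ c ∈ S, closedBall c 1) := by
  intro c v₁ v₂ a b ha hb hv₁ hv₂ hv h₁ h₂
  simp only [Set.mem_iInter₂, mem_closedBall] at h₁ h₂ ⊢
  intro c' hc'
  rw [dist_comm]
  exact dist_add_arc_le_one ha hb hv₁ hv₂ hv (by rw [dist_comm]; exact h₁ c' hc')
    (by rw [dist_comm]; exact h₂ c' hc')

/-- If `w₁` minimizes `⟪·, u⟫` on the short arc of the unit circle from `w₁` to `w₂`, then the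
tangent `w₂ - ⟪w₁, w₂⟫ • w₁` of the arc at `w₁` satisfies `⟪·, u⟫ ≥ 0`. -/
lemma inner_mul_inner_le_of_forall_arc {w₁ w₂ u : V} (h₁ : ‖w₁‖ = 1) (h₂ : ‖w₂‖ = 1)
    (hmin : ∀ a b : ℝ, 0 ≤ a → 0 ≤ b → ‖a • w₁ + b • w₂‖ = 1 →
      ⟪w₁, u⟫_ℝ ≤ ⟪a • w₁ + b • w₂, u⟫_ℝ) :
    ⟪w₁, w₂⟫_ℝ * ⟪w₁, u⟫_ℝ ≤ ⟪w₂, u⟫_ℝ := by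
  set A := ⟪w₁, u⟫_ℝ
  set B := ⟪w₂, u⟫_ℝ
  set k := ⟪w₁, w₂⟫_ℝ
  have hk : -1 ≤ k := by
    have := abs_real_inner_le_norm w₁ w₂
    rw [h₁, h₂, one_mul] at this
    exact (abs_le.mp this).1
  set L : ℝ → ℝ := fun t => ‖(1 - t) • w₁ + t • w₂‖
  have hL_sq (t : ℝ) : L t ^ 2 = 1 - 2 * t * (1 - t) * (1 - k) := by
    simp only [L, ← real_inner_self_eq_norm_sq, inner_add_left, inner_add_right,
      real_inner_smul_left, real_inner_smul_right, real_inner_comm w₁ w₂]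
    rw [real_inner_self_eq_norm_sq, real_inner_self_eq_norm_sq, h₁, h₂]
    ring
  set g : ℝ → ℝ := fun t => (L t + 1) * (B - A) + 2 * (1 - t) * (1 - k) * A
  have hg : ∀ t ∈ Set.Ioo (0 : ℝ) (1 / 2), 0 ≤ g t := by
    rintro t ⟨ht₀, ht₁⟩
    have hL : 0 < L t := by
      have : 0 < L t ^ 2 := by
        rw [hL_sq]
        nlinarith [mul_nonneg (mul_nonneg ht₀.le (by linarith : 0 ≤ 1 - t))
          (by linarith : 0 ≤ 1 + k)]
      exact lt_of_le_of_ne (norm_nonneg _) (by rintro h; rw [← h] at this; simp at this)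
    have hmin_t := hmin ((L t)⁻¹ * (1 - t)) ((L t)⁻¹ * t)
      (mul_nonneg (inv_nonneg.mpr hL.le) (by linarith)) (mul_nonneg (inv_nonneg.mpr hL.le) ht₀.le)
      (by rw [mul_smul, mul_smul, ← smul_add, norm_smul, Real.norm_of_nonneg (by positivity),
        inv_mul_cancel₀ hL.ne'])
    rw [inner_add_left, real_inner_smul_left, real_inner_smul_left] at hmin_t
    have hLA : L t * A ≤ (1 - t) * A + t * B := by
      have := mul_le_mul_of_nonneg_left hmin_t hL.le
      field_simp at this
      linarith
    have e : t * g t = (L t + 1) * ((1 - t) * A + t * B - L t * A) := by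
      simp only [g]
      linear_combination A * hL_sq t
    have : 0 ≤ t * g t := by rw [e]; exact mul_nonneg (by linarith) (by linarith)
    exact nonneg_of_mul_nonneg_right this ht₀
  have hg_cont : Continuous g := by fun_prop
  have hg0 : g 0 = 2 * (B - k * A) := by simp only [g, L]; simp [h₁]; ring
  have := ge_of_tendsto ((hg_cont.tendsto 0).mono_left nhdsWithin_le_nhds)
    (eventually_of_mem (Ioo_mem_nhdsGT (by norm_num : (0 : ℝ) < 1 / 2)) hg)
  linarith

lemma inner_smul_add_smul_of_orthonormal {e n : V} (he : ‖e‖ = 1) (hn : ‖n‖ = 1)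
    (hen : ⟪e, n⟫_ℝ = 0) (a b a' b' : ℝ) :
    ⟪a • e + b • n, a' • e + b' • n⟫_ℝ = a * a' + b * b' := by
  simp only [inner_add_left, inner_add_right, real_inner_smul_left, real_inner_smul_right,
    real_inner_self_eq_norm_sq, he, hn, hen, real_inner_comm e n]
  ring

lemma norm_smul_add_smul_of_orthonormal {e n : V} (he : ‖e‖ = 1) (hn : ‖n‖ = 1)
    (hen : ⟪e, n⟫_ℝ = 0) {a b : ℝ} (hab : a ^ 2 + b ^ 2 = 1) : ‖a • e + b • n‖ = 1 := by
  rw [← pow_eq_one_iff_of_nonneg (norm_nonneg _) two_ne_zero, ← real_inner_self_eq_norm_sq,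
    inner_smul_add_smul_of_orthonormal he hn hen]
  linear_combination hab

/-- The tangent condition for the unit circle through `x₀` and `x₀ + (2 * h) • e` centred at
`x₀ + h • e + s • n`. -/
lemma IsSpindleConvex.mul_inner_le {K : Set V} (hK : IsSpindleConvex K) {x₀ u e n : V}
    (hmin : IsMinOn (⟪·, u⟫_ℝ) K x₀) (hx₀ : x₀ ∈ K) (he : ‖e‖ = 1) (hn : ‖n‖ = 1)
    (hen : ⟪e, n⟫_ℝ = 0) {h s : ℝ} (hh : 0 < h) (hs : 0 < s) (hhs : h ^ 2 + s ^ 2 = 1)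
    (hz : x₀ + (2 * h) • e ∈ K) :
    h * ⟪n, u⟫_ℝ ≤ s * ⟪e, u⟫_ℝ := by
  set c := x₀ + (h • e + s • n)
  set w₁ := (-h) • e + (-s) • n
  set w₂ := h • e + (-s) • n
  have hw₁ : ‖w₁‖ = 1 := norm_smul_add_smul_of_orthonormal he hn hen (by linear_combination hhs)
  have hw₂ : ‖w₂‖ = 1 := norm_smul_add_smul_of_orthonormal he hn hen (by linear_combination hhs)
  have hcw₁ : c + w₁ = x₀ := by simp only [c, w₁, neg_smul]; abel
  have hcw₂ : c + w₂ = x₀ + (2 * h) • e := by simp only [c, w₂, neg_smul, mul_smul, two_smul]; abel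
  have key := inner_mul_inner_le_of_forall_arc (u := u) hw₁ hw₂ fun a b ha hb hab => by
    have hmem := hK ha hb hw₁ hw₂ hab (hcw₁.symm ▸ hx₀) (hcw₂.symm ▸ hz)
    have hle : ⟪c + w₁, u⟫_ℝ ≤ ⟪c + (a • w₁ + b • w₂), u⟫_ℝ := by
      rw [hcw₁]; exact isMinOn_iff.mp hmin _ hmem
    rw [inner_add_left c, inner_add_left c] at hle
    linarith
  rw [inner_smul_add_smul_of_orthonormal he hn hen] at key
  simp only [w₁, w₂, inner_add_left, real_inner_smul_left] at key
  have : 0 ≤ 2 * h * s * (s * ⟪e, u⟫_ℝ - h * ⟪n, u⟫_ℝ) := by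
    linear_combination key + (s * ⟪n, u⟫_ℝ - h * ⟪e, u⟫_ℝ) * hhs
  nlinarith [mul_pos hh hs]

lemma IsSpindleConvex.norm_sub_sq_le {K : Set V} (hK : IsSpindleConvex K) {x₀ u z : V}
    (hmin : IsMinOn (⟪·, u⟫_ℝ) K x₀) (hx₀ : x₀ ∈ K) (hu : ‖u‖ = 1) (hz : z ∈ K)
    (hz₂ : ‖z - x₀‖ < 2) :
    ‖z - x₀‖ ^ 2 ≤ 2 * ⟪z - x₀, u⟫_ℝ := by
  set p := z - x₀
  rcases eq_or_ne p 0 with hp | hp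
  · simp [hp]
  set d := ‖p‖
  have hd : 0 < d := norm_pos_iff.mpr hp
  set e := d⁻¹ • p
  have he : ‖e‖ = 1 := norm_smul_inv_norm hp
  have hpe : p = d • e := by simp only [e, smul_smul, mul_inv_cancel₀ hd.ne', one_smul]
  set α := ⟪e, u⟫_ℝ
  have hα : 0 ≤ α := by
    have hpu : 0 ≤ d * α := by
      rw [← real_inner_smul_left, ← hpe, inner_sub_left]
      linarith [isMinOn_iff.mp hmin z hz]
    exact nonneg_of_mul_nonneg_right hpu hd
  set q := u - α • e
  have heq : ⟪e, q⟫_ℝ = 0 := by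
    simp only [q, inner_sub_right, real_inner_smul_right, real_inner_self_eq_norm_sq, he]; ring
  have hq : ‖q‖ ^ 2 = 1 - α ^ 2 := by
    rw [norm_sub_sq_real, norm_smul, real_inner_smul_right, hu, he, Real.norm_eq_abs, mul_one,
      sq_abs, real_inner_comm]
    ring
  set h := d / 2 with hh_def
  have hh : 0 < h := by positivity
  have hh₁ : h ^ 2 < 1 := by nlinarith
  set s := √(1 - h ^ 2)
  have hs : 0 < s := Real.sqrt_pos.mpr (by linarith)
  have hhs : h ^ 2 + s ^ 2 = 1 := by rw [Real.sq_sqrt (by linarith)]; ring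
  -- the tangent condition is sharpest for the unit normal `‖q‖⁻¹ • q` to `e` closest to `u`
  have hhq : h * ‖q‖ ≤ s * α := by
    rcases eq_or_ne q 0 with hq0 | hq0
    · simp [hq0]; positivity
    have hqu : ⟪‖q‖⁻¹ • q, u⟫_ℝ = ‖q‖ := by
      rw [real_inner_smul_left, show u = q + α • e by simp [q],
        inner_add_right, real_inner_self_eq_norm_sq, real_inner_smul_right, real_inner_comm, heq,
        mul_zero, add_zero]
      field_simp
    rw [← hqu]
    refine hK.mul_inner_le hmin hx₀ he (norm_smul_inv_norm hq0) ?_ hh hs hhs ?_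
    · rw [real_inner_smul_right, heq, mul_zero]
    · rwa [show 2 * h = d by ring, ← hpe, add_sub_cancel]
  have hsq : h ^ 2 * (1 - α ^ 2) ≤ s ^ 2 * α ^ 2 := by
    rw [← hq, ← mul_pow, ← mul_pow]
    exact pow_le_pow_left₀ (by positivity) hhq 2
  have hαh : h ≤ α := by nlinarith
  rw [hpe, real_inner_smul_left]
  nlinarith [mul_le_mul_of_nonneg_left hαh hd.le]

theorem iInter_closedBall_subset_closedBall_add_of_isMinOn {S : Set V} (hS : S.Nonempty)
    {x₀ u : V} (hu : ‖u‖ = 1) (hx₀ : x₀ ∈ ⋂ c ∈ S, closedBall c 1)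
    (hmin : IsMinOn (⟪·, u⟫_ℝ) (⋂ c ∈ S, closedBall c 1) x₀) :
    ⋂ c ∈ S, closedBall c 1 ⊆ closedBall (x₀ + u) 1 := by
  intro z hz
  rw [mem_closedBall, dist_add_le_one_iff hu]
  have hz₂ : ‖z - x₀‖ ≤ 2 := by
    obtain ⟨c, hc⟩ := hS
    have hzc := Set.mem_iInter₂.mp hz c hc
    have hx₀c := Set.mem_iInter₂.mp hx₀ c hc
    rw [mem_closedBall] at hzc hx₀c
    rw [← dist_eq_norm]
    linarith [dist_triangle_right z x₀ c]
  have hconv : Convex ℝ (⋂ c ∈ S, closedBall c 1) :=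
    convex_iInter₂ fun c _ => convex_closedBall c 1
  -- the case `‖z - x₀‖ = 2` follows from the points `x₀ + t • (z - x₀)`, `t < 1`, by continuity
  have hseg : ∀ t ∈ Set.Ioo (0 : ℝ) 1, t * ‖z - x₀‖ ^ 2 ≤ 2 * ⟪z - x₀, u⟫_ℝ := by
    rintro t ⟨ht₀, ht₁⟩
    have hnorm : ‖x₀ + t • (z - x₀) - x₀‖ = t * ‖z - x₀‖ := by
      rw [add_sub_cancel_left, norm_smul, Real.norm_of_nonneg ht₀.le]
    have key := (isSpindleConvex_iInter_closedBall S).norm_sub_sq_le hmin hx₀ hu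
      (hconv.add_smul_sub_mem hx₀ hz ⟨ht₀.le, ht₁.le⟩) (by rw [hnorm]; nlinarith)
    rw [hnorm, add_sub_cancel_left, real_inner_smul_left] at key
    exact le_of_mul_le_mul_left (by linarith) ht₀
  exact le_of_tendsto (((continuous_id.mul continuous_const).tendsto' 1 _ (one_mul _)).mono_left
    nhdsWithin_le_nhds) (eventually_of_mem (Ioo_mem_nhdsLT zero_lt_one) hseg)

end InnerProductSpace

section Width

variable {C : Set E2} {u : E2}

lemma inner_sub_le_diam (hC : Bornology.IsBounded C) (hu : ‖u‖ = 1) {x y : E2} (hx : x ∈ C)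
    (hy : y ∈ C) : ⟪x - y, u⟫_ℝ ≤ diam C :=
  (inner_sub_le_dist x y hu).trans (dist_le_diam_of_mem hC hx hy)

lemma inner_sub_le_dirWidth (hC : Bornology.IsBounded C) (hu : ‖u‖ = 1) {x y : E2} (hx : x ∈ C)
    (hy : y ∈ C) : ⟪x - y, u⟫_ℝ ≤ dirWidth C u :=
  le_csSup ⟨diam C, by rintro _ ⟨x, hx, y, hy, rfl⟩; exact inner_sub_le_diam hC hu hx hy⟩
    ⟨x, hx, y, hy, rfl⟩

lemma dirWidth_le_diam (hC : Bornology.IsBounded C) (hu : ‖u‖ = 1) : dirWidth C u ≤ diam C :=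
  Real.sSup_le (by rintro _ ⟨x, hx, y, hy, rfl⟩; exact inner_sub_le_diam hC hu hx hy) diam_nonneg

lemma dirWidth_eq_inner_sub {a b : E2} (ha : a ∈ C) (hb : b ∈ C)
    (hmax : IsMaxOn (⟪·, u⟫_ℝ) C a) (hmin : IsMinOn (⟪·, u⟫_ℝ) C b) :
    dirWidth C u = ⟪a - b, u⟫_ℝ := by
  refine IsGreatest.csSup_eq ⟨⟨a, ha, b, hb, rfl⟩, ?_⟩
  rintro _ ⟨x, hx, y, hy, rfl⟩
  rw [inner_sub_left, inner_sub_left]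
  linarith [isMaxOn_iff.mp hmax x hx, isMinOn_iff.mp hmin y hy]

lemma isLUB_dirWidth_diam (hne : C.Nonempty) (hC : Bornology.IsBounded C) :
    IsLUB {w | ∃ u : E2, ‖u‖ = 1 ∧ w = dirWidth C u} (diam C) := by
  refine ⟨by rintro _ ⟨u, hu, rfl⟩; exact dirWidth_le_diam hC hu, fun b hb => ?_⟩
  have hb' {x y : E2} (hx : x ∈ C) (hy : y ∈ C) {u : E2} (hu : ‖u‖ = 1) : ⟪x - y, u⟫_ℝ ≤ b :=
    (inner_sub_le_dirWidth hC hu hx hy).trans (hb ⟨u, hu, rfl⟩)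
  obtain ⟨x₀, hx₀⟩ := hne
  obtain ⟨u₀, hu₀⟩ := exists_norm_eq E2 zero_le_one
  refine diam_le_of_forall_dist_le (by simpa using hb' hx₀ hx₀ hu₀) fun x hx y hy => ?_
  rcases eq_or_ne x y with rfl | hxy
  · simpa using hb' hx hx hu₀
  have hxy' : x - y ≠ 0 := sub_ne_zero.mpr hxy
  have hdist : dist x y = ⟪x - y, ‖x - y‖⁻¹ • (x - y)⟫_ℝ := by
    rw [real_inner_smul_right, real_inner_self_eq_norm_sq, dist_eq_norm]
    field_simp
  exact hdist ▸ hb' hx hy (norm_smul_inv_norm hxy')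

lemma minWidth_eq_two_sub_diam {C' : Set E2} (hne : C'.Nonempty) (hC' : Bornology.IsBounded C')
    (hsum : ∀ u : E2, ‖u‖ = 1 → dirWidth C u + dirWidth C' u = 2) :
    minWidth C = 2 - diam C' := by
  have hlub := isLUB_dirWidth_diam hne hC'
  obtain ⟨u₀, hu₀⟩ := exists_norm_eq E2 zero_le_one
  refine IsGLB.csInf_eq ⟨?_, fun b hb => ?_⟩ ⟨_, u₀, hu₀, rfl⟩
  · rintro _ ⟨u, hu, rfl⟩
    linarith [hlub.1 ⟨u, hu, rfl⟩, hsum u hu]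
  · have : diam C' ≤ 2 - b := hlub.2 (by
      rintro _ ⟨u, hu, rfl⟩
      linarith [hb ⟨u, hu, rfl⟩, hsum u hu])
    linarith

end Width

lemma isBounded_dualDP {D : Set E2} (hne : D.Nonempty) : Bornology.IsBounded (dualDP D) := by
  obtain ⟨x, hx⟩ := hne
  exact isBounded_closedBall.subset fun y hy => by rw [mem_closedBall, dist_comm]; exact hy x hx

lemma subset_dualDP_iInter_closedBall (S : Set E2) : S ⊆ dualDP (⋂ c ∈ S, closedBall c 1) :=
  fun c hc _ hx => Set.mem_iInter₂.mp hx c hc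

theorem dirWidth_add_dirWidth_dualDP {S : Set E2} (hS : S.Nonempty)
    (hne : (⋂ c ∈ S, closedBall c 1).Nonempty) {u : E2} (hu : ‖u‖ = 1) :
    dirWidth (⋂ c ∈ S, closedBall c 1) u + dirWidth (dualDP (⋂ c ∈ S, closedBall c 1)) u = 2 := by
  set D := ⋂ c ∈ S, closedBall c 1
  obtain ⟨c, hc⟩ := hS
  have hD : IsCompact D := (isCompact_closedBall c 1).of_isClosed_subset
    (isClosed_biInter fun _ _ => isClosed_closedBall) (Set.biInter_subset_of_mem hc)
  have hcont : ContinuousOn (⟪·, u⟫_ℝ) D := (continuous_id.inner continuous_const).continuousOn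
  obtain ⟨x₀, hx₀, hmin⟩ := hD.exists_isMinOn hne hcont
  obtain ⟨x₁, hx₁, hmax⟩ := hD.exists_isMaxOn hne hcont
  have hy₁ : x₀ + u ∈ dualDP D := fun _ hx =>
    iInter_closedBall_subset_closedBall_add_of_isMinOn ⟨c, hc⟩ hu hx₀ hmin hx
  have hy₀ : x₁ + -u ∈ dualDP D := fun _ hx =>
    iInter_closedBall_subset_closedBall_add_of_isMinOn ⟨c, hc⟩ (by rwa [norm_neg]) hx₁
      (isMinOn_iff.mpr fun y hy => by
        simpa only [inner_neg_right, neg_le_neg_iff] using isMaxOn_iff.mp hmax y hy) hx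
  have huu : ⟪u, u⟫_ℝ = 1 := by rw [real_inner_self_eq_norm_sq, hu, one_pow]
  have hmax' : IsMaxOn (⟪·, u⟫_ℝ) (dualDP D) (x₀ + u) := isMaxOn_iff.mpr fun y hy => by
    have := inner_sub_le_dist y x₀ hu
    rw [inner_sub_left] at this
    rw [inner_add_left, huu]
    linarith [dist_comm y x₀ ▸ hy x₀ hx₀]
  have hmin' : IsMinOn (⟪·, u⟫_ℝ) (dualDP D) (x₁ + -u) := isMinOn_iff.mpr fun y hy => by
    have := inner_sub_le_dist x₁ y hu
    rw [inner_sub_left] at this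
    rw [inner_add_left, inner_neg_left, huu]
    linarith [hy x₁ hx₁]
  rw [dirWidth_eq_inner_sub hx₁ hx₀ hmax hmin, dirWidth_eq_inner_sub hy₁ hy₀ hmax' hmin']
  simp only [inner_sub_left, inner_add_left, inner_neg_left, huu]
  ring

/-- Corollary 1 of the paper: for every disk-polygon `D`,
`w(D) + diam(D*) = 2` and `w(D*) + diam(D) = 2`. -/
theorem minWidth_add_diam_dual (S : Finset E2) (hS : S.Nonempty) (D : Set E2)
    (hD : D = ⋂ c ∈ S, closedBall c 1) (hint : (interior D).Nonempty) :
    minWidth D + Metric.diam (dualDP D) = 2 ∧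
    minWidth (dualDP D) + Metric.diam D = 2 := by
  replace hD : D = ⋂ c ∈ (S : Set E2), closedBall c 1 := hD
  subst hD
  have hne := hint.mono interior_subset
  have hsum (u : E2) (hu : ‖u‖ = 1) := dirWidth_add_dirWidth_dualDP hS.to_set hne hu
  obtain ⟨c, hc⟩ := hS.to_set
  have hbdd : Bornology.IsBounded (⋂ c ∈ (S : Set E2), closedBall c 1) :=
    isBounded_closedBall.subset (Set.biInter_subset_of_mem hc)
  have hdual_ne := Set.Nonempty.mono (subset_dualDP_iInter_closedBall S) ⟨c, hc⟩
  constructor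
  · rw [minWidth_eq_two_sub_diam hdual_ne (isBounded_dualDP hne) hsum]
    ring
  · rw [minWidth_eq_two_sub_diam hne hbdd fun u hu => by linarith [hsum u hu]]
    ring
end
end

section
/- Let D be a disk-polygon with center parameter d, where 0 < d < 1. Then the diameter of the dual disk-polygon satisfies diam(D*) ≤ d. -/
open Metric Real MeasureTheory
open scoped InnerProductSpace Pointwise ENNReal

noncomputable section

attribute [local instance] Classical.propDecidable

/-- Auxiliary: a point in the "ball hull" of `S` is within `d` of every point of `S`. -/
lemma dist_le_of_ball_hull (d : ℝ) (hd1 : 0 < d) (S : Finset E2) (hS : S.Nonempty)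
    (hdiam : ∀ c ∈ S, ∀ c' ∈ S, dist c c' ≤ d) (hd2 : d ≤ 1)
    (y : E2) (hy : ∀ z : E2, (∀ c ∈ S, dist c z ≤ 1) → dist y z ≤ 1)
    (s : E2) (hs : s ∈ S) : dist y s ≤ d := by
  by_contra hcon
  push_neg at hcon
  obtain ⟨s₀, hs₀, hmax⟩ := S.exists_max_image (fun c => dist y c) hS
  set ρ := dist y s₀ with hρdef
  have hρd : d < ρ := lt_of_lt_of_le hcon (hmax s hs)
  have hρ1 : ρ ≤ 1 := hy s₀ (fun c hc => by
    calc dist c s₀ ≤ d := hdiam c hc s₀ hs₀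
    _ ≤ 1 := hd2)
  have hρpos : 0 < ρ := hd1.trans hρd
  set c0 : ℝ := (ρ^2 - d^2)/(2*ρ) with hc0def
  have hc0pos : 0 < c0 := by
    apply div_pos
    · nlinarith
    · linarith
  set lam : ℝ := 1 + c0 with hlamdef
  set μ : ℝ := lam / ρ with hμdef
  have hμρ : μ * ρ = lam := div_mul_cancel₀ _ (ne_of_gt hρpos)
  have hlam1 : 1 < lam := by linarith
  have hμ1 : 1 ≤ μ := by
    rw [hμdef, le_div_iff₀ hρpos]; linarith
  set z := y + μ • (s₀ - y) with hz
  have hdistyz : dist y z = lam := by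
    rw [hz, dist_eq_norm]
    have : y - (y + μ • (s₀ - y)) = (-μ) • (s₀ - y) := by
      module
    rw [this, norm_smul]
    have : ‖s₀ - y‖ = ρ := by rw [hρdef, dist_eq_norm, norm_sub_rev]
    rw [this]
    simp only [norm_neg, Real.norm_eq_abs, abs_of_pos (lt_of_lt_of_le one_pos hμ1 : (0:ℝ) < μ)]
    exact hμρ
  have hall : ∀ c ∈ S, dist c z ≤ 1 := by
    intro c hc
    have ha : ‖c - y‖ ≤ ρ := by
      rw [← dist_eq_norm, dist_comm]; exact hmax c hc
    have hu : ‖s₀ - y‖ = ρ := by rw [hρdef, dist_eq_norm, norm_sub_rev]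
    have hua : ‖(s₀ - y) - (c - y)‖ ≤ d := by
      have : (s₀ - y) - (c - y) = s₀ - c := by abel
      rw [this, ← dist_eq_norm, dist_comm]
      exact hdiam c hc s₀ hs₀
    have hkey : ρ^2 - 2 * ⟪ s₀ - y, c - y ⟫_ℝ + ‖c - y‖^2 ≤ d^2 := by
      have := norm_sub_sq_real (s₀ - y) (c - y)
      nlinarith [hua, norm_nonneg ((s₀ - y) - (c - y))]
    have hexp : dist c z ^ 2 = ‖c - y‖^2 - 2 * μ * ⟪ s₀ - y, c - y ⟫_ℝ + μ^2 * ρ^2 := by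
      rw [dist_eq_norm, hz]
      have : c - (y + μ • (s₀ - y)) = (c - y) - μ • (s₀ - y) := by abel
      rw [this, norm_sub_sq_real]
      rw [real_inner_smul_right, norm_smul, Real.norm_eq_abs,
        abs_of_pos (lt_of_lt_of_le one_pos hμ1 : (0:ℝ) < μ), hu,
        real_inner_comm]
      ring
    have hsq : dist c z ^ 2 ≤ 1 := by
      rw [hexp]
      have hμ0 : (0:ℝ) < μ := lt_of_lt_of_le one_pos hμ1
      have hc02 : c0 * (2*ρ) = ρ^2 - d^2 := by
        rw [hc0def]; field_simp
      nlinarith [mul_le_mul_of_nonneg_left hkey (le_of_lt hμ0),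
        mul_nonneg (sub_nonneg.2 hμ1) (sq_nonneg ‖c - y‖), sq_nonneg c0]
    nlinarith [dist_nonneg (x := c) (y := z)]
  have := hy z hall
  rw [hdistyz] at this
  linarith

/-- For a disk-polygon with center parameter `d`, `0 < d < 1`, the diameter of
the dual disk-polygon is at most `d`. -/
theorem diam_dual_le_of_small (d : ℝ) (hd1 : 0 < d) (hd2 : d < 1)
    (S : Finset E2) (hS : S.Nonempty) (D : Set E2)
    (hD : D = ⋂ c ∈ S, closedBall c 1) (hint : (interior D).Nonempty)
    (hcp : ∀ c ∈ S, ∀ c' ∈ S, dist c c' ≤ d) :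
    Metric.diam (dualDP D) ≤ d := by
  apply Metric.diam_le_of_forall_dist_le hd1.le
  intro y hy y' hy'
  have hmem : ∀ z : E2, (∀ c ∈ S, dist c z ≤ 1) → z ∈ D := by
    intro z hz
    rw [hD]
    simp only [Set.mem_iInter, Metric.mem_closedBall]
    intro c hc
    rw [dist_comm]
    exact hz c hc
  have hhull : ∀ w : E2, w ∈ dualDP D →
      ∀ z : E2, (∀ c ∈ S, dist c z ≤ 1) → dist w z ≤ 1 := by
    intro w hw z hz
    rw [dist_comm]
    exact hw z (hmem z hz)
  have h1 : ∀ s ∈ S, dist y s ≤ d :=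
    fun s hs => dist_le_of_ball_hull d hd1 S hS hcp hd2.le y (hhull y hy) s hs
  have h2 : dist y' y ≤ d := by
    refine dist_le_of_ball_hull d hd1 (insert y S) ⟨y, Finset.mem_insert_self y S⟩ ?_ hd2.le y' ?_ y
      (Finset.mem_insert_self y S)
    · intro c hc c' hc'
      rcases Finset.mem_insert.1 hc with hceq | hcS <;>
        rcases Finset.mem_insert.1 hc' with hceq' | hcS'
      · rw [hceq, hceq', dist_self]; exact hd1.le
      · rw [hceq]; exact h1 c' hcS'
      · rw [hceq', dist_comm]; exact h1 c hcS
      · exact hcp c hcS c' hcS'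
    · intro z hz
      exact hhull y' hy' z (fun c hc => hz c (Finset.mem_insert_of_mem hc))
  rw [dist_comm] at h2
  exact h2
end
end

section
/- For all d with 1 ≤ d < √3, the area of a disk of diameter equal to the minimal width of the regular disk-triangle Δ(d) exceeds the area of Δ(d): (π/4)·(1 − (1/2)·√(4 + 2d² − 2√3·d·√(4 − d²)))² > 3·arccos(d/2) + (√3/4)·d² − (3/4)·d·√(4 − d²) − π/2. -/
open Metric Real MeasureTheory
open scoped InnerProductSpace Pointwise ENNReal

noncomputable section

set_option maxHeartbeats 2000000

lemma keyIneq (x : ℝ) (hx0 : 0 < x) (hx1 : x ≤ 0.5236) :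
    π / 4 * (1 - Real.cos x + Real.sqrt 3 * Real.sin x) ^ 2
      > 3 * x + Real.sqrt 3 * Real.sin x ^ 2 - 3 * (Real.sin x * Real.cos x) := by
  have hs : Real.sqrt 3 ^ 2 = 3 := Real.sq_sqrt (by norm_num)
  have hs0 : (0:ℝ) ≤ Real.sqrt 3 := Real.sqrt_nonneg 3
  have hslo : (1.732:ℝ) ≤ Real.sqrt 3 := by nlinarith
  have hshi : Real.sqrt 3 ≤ 1.7321 := by nlinarith
  have hxabs : |x| ≤ 1 := by rw [abs_of_pos hx0]; linarith
  have hsb := abs_le.1 (Real.sin_bound hxabs)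
  have hcb := abs_le.1 (Real.cos_bound hxabs)
  rw [abs_of_pos hx0] at hsb hcb
  obtain ⟨hsb1, hsb2⟩ := hsb
  obtain ⟨hcb1, hcb2⟩ := hcb
  have hsl : x - x^3/6 - 5/96*x^4 ≤ Real.sin x := by nlinarith
  have hcl : 1 - x^2/2 - 5/96*x^4 ≤ Real.cos x := by nlinarith
  have hcu : Real.cos x ≤ 1 - x^2/2 + 5/96*x^4 := by nlinarith
  have hsu : Real.sin x < x := Real.sin_lt hx0
  have hb1 : (0:ℝ) ≤ (0.5236 - x) * x := mul_nonneg (by linarith) hx0.le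
  have hb2 : (0:ℝ) ≤ (0.5236 - x) * x^2 := mul_nonneg (by linarith) (sq_nonneg x)
  have hb3 : (0:ℝ) ≤ (0.5236 - x) * x^3 := by nlinarith
  have hApos : 0 < x - x^3/6 - 5/96*x^4 := by nlinarith
  have hBpos : 0 < x^2/2 - 5/96*x^4 := by nlinarith
  have hCpos : 0 < 1 - x^2/2 - 5/96*x^4 := by nlinarith
  have hsinpos : 0 < Real.sin x := lt_of_lt_of_le hApos hsl
  have hAC : (x - x^3/6 - 5/96*x^4) * (1 - x^2/2 - 5/96*x^4) ≤ Real.sin x * Real.cos x :=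
    mul_le_mul hsl hcl hCpos.le hsinpos.le
  have hsin_sq : Real.sin x ^ 2 ≤ x^2 := by nlinarith
  have hRHS : 3*x + Real.sqrt 3 * Real.sin x^2 - 3*(Real.sin x * Real.cos x) ≤
      3*x + Real.sqrt 3 * x^2
        - 3*((x - x^3/6 - 5/96*x^4) * (1 - x^2/2 - 5/96*x^4)) := by
    have h := mul_le_mul_of_nonneg_left hsin_sq hs0
    linarith
  -- lower bound for the left side
  have hQle : Real.sqrt 3*(x - x^3/6 - 5/96*x^4) + (x^2/2 - 5/96*x^4)
      ≤ 1 - Real.cos x + Real.sqrt 3 * Real.sin x := by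
    have h := mul_le_mul_of_nonneg_left hsl hs0
    linarith
  have hQpos : 0 < Real.sqrt 3*(x - x^3/6 - 5/96*x^4) + (x^2/2 - 5/96*x^4) := by
    have h3 : (0:ℝ) < Real.sqrt 3 := by linarith
    exact add_pos (mul_pos h3 hApos) hBpos
  have hsq : (Real.sqrt 3*(x - x^3/6 - 5/96*x^4) + (x^2/2 - 5/96*x^4))^2
      ≤ (1 - Real.cos x + Real.sqrt 3 * Real.sin x)^2 :=
    pow_le_pow_left₀ hQpos.le hQle 2
  have hpi : (3.141592:ℝ) < π := Real.pi_gt_d6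
  have hL : π/4 * (Real.sqrt 3*(x - x^3/6 - 5/96*x^4) + (x^2/2 - 5/96*x^4))^2
      ≤ π/4 * (1 - Real.cos x + Real.sqrt 3 * Real.sin x)^2 :=
    mul_le_mul_of_nonneg_left hsq (by positivity)
  -- core rational polynomial inequality
  have hcube : (0:ℝ) < 0.624 - 0.64*x - 0.7453*x^2 - 0.5202*x^3 := by nlinarith [hb1, hb2, hx1]
  have hpoly : 3.141592/4 * (3*(x - x^3/6 - 5/96*x^4)^2
        + 2*1.732*((x - x^3/6 - 5/96*x^4)*(x^2/2 - 5/96*x^4)) + (x^2/2 - 5/96*x^4)^2)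
      > 1.7321*x^2 + 3*x - 3*((x - x^3/6 - 5/96*x^4) * (1 - x^2/2 - 5/96*x^4)) := by
    nlinarith [mul_pos (mul_pos hx0 hx0) hcube, pow_nonneg hx0.le 2, pow_nonneg hx0.le 3,
      pow_nonneg hx0.le 4, pow_nonneg hx0.le 5, pow_nonneg hx0.le 6, pow_nonneg hx0.le 7,
      pow_nonneg hx0.le 8]
  have hAB : (0:ℝ) ≤ (x - x^3/6 - 5/96*x^4)*(x^2/2 - 5/96*x^4) :=
    mul_nonneg hApos.le hBpos.le
  have hexp : (Real.sqrt 3*(x - x^3/6 - 5/96*x^4) + (x^2/2 - 5/96*x^4))^2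
      = 3*(x - x^3/6 - 5/96*x^4)^2
        + 2*Real.sqrt 3*((x - x^3/6 - 5/96*x^4)*(x^2/2 - 5/96*x^4)) + (x^2/2 - 5/96*x^4)^2 := by
    linear_combination (x - x^3/6 - 5/96*x^4)^2 * hs
  have hbridge : π/4 * (Real.sqrt 3*(x - x^3/6 - 5/96*x^4) + (x^2/2 - 5/96*x^4))^2
      > 3*x + Real.sqrt 3 * x^2
        - 3*((x - x^3/6 - 5/96*x^4) * (1 - x^2/2 - 5/96*x^4)) := by
    rw [hexp]
    have hX : (0:ℝ) ≤ 3*(x - x^3/6 - 5/96*x^4)^2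
        + 2*Real.sqrt 3*((x - x^3/6 - 5/96*x^4)*(x^2/2 - 5/96*x^4)) + (x^2/2 - 5/96*x^4)^2 := by
      nlinarith [sq_nonneg (x - x^3/6 - 5/96*x^4), sq_nonneg (x^2/2 - 5/96*x^4), hAB, hs0]
    have h1 : 3.141592/4 * (3*(x - x^3/6 - 5/96*x^4)^2
        + 2*Real.sqrt 3*((x - x^3/6 - 5/96*x^4)*(x^2/2 - 5/96*x^4)) + (x^2/2 - 5/96*x^4)^2)
        ≤ π/4 * (3*(x - x^3/6 - 5/96*x^4)^2
        + 2*Real.sqrt 3*((x - x^3/6 - 5/96*x^4)*(x^2/2 - 5/96*x^4)) + (x^2/2 - 5/96*x^4)^2) := by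
      apply mul_le_mul_of_nonneg_right _ hX
      linarith
    have h2 : 3.141592/4 * (3*(x - x^3/6 - 5/96*x^4)^2
        + 2*1.732*((x - x^3/6 - 5/96*x^4)*(x^2/2 - 5/96*x^4)) + (x^2/2 - 5/96*x^4)^2)
        ≤ 3.141592/4 * (3*(x - x^3/6 - 5/96*x^4)^2
        + 2*Real.sqrt 3*((x - x^3/6 - 5/96*x^4)*(x^2/2 - 5/96*x^4)) + (x^2/2 - 5/96*x^4)^2) := by
      nlinarith [mul_nonneg (sub_nonneg.2 hslo) hAB]
    have h3 : Real.sqrt 3 * x^2 ≤ 1.7321 * x^2 :=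
      mul_le_mul_of_nonneg_right hshi (sq_nonneg x)
    linarith
  linarith

/-- For `1 ≤ d < √3`, the area of a disk whose diameter is the minimal width of
the regular disk-triangle `Δ(d)` exceeds the area of `Δ(d)`. -/
theorem disk_area_gt_disk_triangle_area (d : ℝ) (hd1 : 1 ≤ d) (hd2 : d < Real.sqrt 3) :
    π / 4 * (1 - 1 / 2 * Real.sqrt (4 + 2 * d ^ 2
        - 2 * Real.sqrt 3 * d * Real.sqrt (4 - d ^ 2))) ^ 2
      > 3 * Real.arccos (d / 2) + Real.sqrt 3 / 4 * d ^ 2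
        - 3 / 4 * d * Real.sqrt (4 - d ^ 2) - π / 2 := by
  have hs : Real.sqrt 3 ^ 2 = 3 := Real.sq_sqrt (by norm_num)
  have hs0 : (0:ℝ) ≤ Real.sqrt 3 := Real.sqrt_nonneg 3
  have hslo : (1.732:ℝ) ≤ Real.sqrt 3 := by nlinarith
  have hshi : Real.sqrt 3 ≤ 1.7321 := by nlinarith
  have hd2' : d < 2 := by linarith
  have hm1 : (-1:ℝ) ≤ d / 2 := by linarith
  have hm2 : d / 2 ≤ 1 := by linarith
  set θ := Real.arccos (d / 2) with hθdef
  have hcosθ : Real.cos θ = d / 2 := Real.cos_arccos hm1 hm2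
  have hθ0 : 0 ≤ θ := Real.arccos_nonneg _
  have hθpi : θ ≤ π := Real.arccos_le_pi _
  have hpi_gt : (3.141592:ℝ) < π := Real.pi_gt_d6
  have hpi_lt : π < 3.141593 := Real.pi_lt_d6
  -- θ ≤ π/3
  have hθ3 : θ ≤ π / 3 := by
    by_contra h
    push_neg at h
    have := Real.cos_lt_cos_of_nonneg_of_le_pi (by positivity) hθpi h
    rw [hcosθ, Real.cos_pi_div_three] at this
    linarith
  -- π/6 < θ
  have hθ6 : π / 6 < θ := by
    rcases lt_trichotomy θ (π / 6) with h | h | h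
    · have := Real.cos_lt_cos_of_nonneg_of_le_pi hθ0 (by linarith) h
      rw [hcosθ, Real.cos_pi_div_six] at this
      linarith
    · exfalso
      have : Real.cos θ = Real.sqrt 3 / 2 := by rw [h, Real.cos_pi_div_six]
      rw [hcosθ] at this
      linarith
    · exact h
  have hsinθ0 : 0 ≤ Real.sin θ := Real.sin_nonneg_of_nonneg_of_le_pi hθ0 hθpi
  -- sqrt(4 - d^2) = 2 sin θ
  have hpyth : Real.sin θ ^ 2 + Real.cos θ ^ 2 = 1 := Real.sin_sq_add_cos_sq θ
  have hsqrt4 : Real.sqrt (4 - d ^ 2) = 2 * Real.sin θ := by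
    have h1 : 4 - d ^ 2 = (2 * Real.sin θ) ^ 2 := by
      have : Real.cos θ ^ 2 = d ^ 2 / 4 := by rw [hcosθ]; ring
      nlinarith [hpyth]
    rw [h1, Real.sqrt_sq (by linarith)]
  -- the big square root
  have hd2c : d = 2 * Real.cos θ := by rw [hcosθ]; ring
  have hbignn : 0 ≤ 2 * Real.sqrt 3 * Real.cos θ - 2 * Real.sin θ := by
    have hc2 : 1 / 2 ≤ Real.cos θ := by rw [hcosθ]; linarith
    by_contra h
    push_neg at h
    have h1 : 0 < Real.sin θ - Real.sqrt 3 * Real.cos θ := by linarith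
    have h2 : 0 < Real.sin θ + Real.sqrt 3 * Real.cos θ := by nlinarith
    nlinarith [mul_pos h1 h2, hpyth, hs, hc2]
  have hbig : Real.sqrt (4 + 2 * d ^ 2 - 2 * Real.sqrt 3 * d * Real.sqrt (4 - d ^ 2))
      = 2 * Real.sqrt 3 * Real.cos θ - 2 * Real.sin θ := by
    have h1 : 4 + 2 * d ^ 2 - 2 * Real.sqrt 3 * d * Real.sqrt (4 - d ^ 2)
        = (2 * Real.sqrt 3 * Real.cos θ - 2 * Real.sin θ) ^ 2 := by
      rw [hsqrt4]
      linear_combination (2 * (d + 2 * Real.cos θ) - 4 * Real.sqrt 3 * Real.sin θ) * hd2c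
        - 4 * Real.cos θ ^ 2 * hs - 4 * hpyth
    rw [h1, Real.sqrt_sq hbignn]
  -- switch to ε = θ - π/6
  set ε := θ - π / 6 with hεdef
  have hθε : θ = ε + π / 6 := by rw [hεdef]; ring
  have hε0 : 0 < ε := by simp only [hεdef]; linarith
  have hε1 : ε ≤ 0.5236 := by
    have : ε ≤ π / 3 - π / 6 := by simp only [hεdef]; linarith
    have h6 : π / 3 - π / 6 = π / 6 := by ring
    rw [h6] at this
    linarith
  have hcε : Real.cos θ = Real.cos ε * (Real.sqrt 3 / 2) - Real.sin ε * (1 / 2) := by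
    rw [hθε, Real.cos_add, Real.cos_pi_div_six, Real.sin_pi_div_six]
  have hsε : Real.sin θ = Real.sin ε * (Real.sqrt 3 / 2) + Real.cos ε * (1 / 2) := by
    rw [hθε, Real.sin_add, Real.cos_pi_div_six, Real.sin_pi_div_six]
  have E1 : 1 - 1 / 2 * Real.sqrt (4 + 2 * d ^ 2
        - 2 * Real.sqrt 3 * d * Real.sqrt (4 - d ^ 2))
      = 1 - Real.cos ε + Real.sqrt 3 * Real.sin ε := by
    rw [hbig, hcε, hsε]
    linear_combination (-(Real.cos ε) / 2) * hs
  have E2 : 3 * θ + Real.sqrt 3 / 4 * d ^ 2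
        - 3 / 4 * d * Real.sqrt (4 - d ^ 2) - π / 2
      = 3 * ε + Real.sqrt 3 * Real.sin ε ^ 2 - 3 * (Real.sin ε * Real.cos ε) := by
    rw [hsqrt4, hd2c, hcε, hsε, hθε]
    linear_combination ((Real.sqrt 3 * Real.cos ε ^ 2 - 5 * Real.cos ε * Real.sin ε) / 4) * hs
  rw [E1, E2]
  exact keyIneq ε hε0 hε1
end
end

section
/- Fix d with 1 ≤ d < √3, set y = (1/2)·√(4 + 2d² − 2√3·d·√(4 − d²)), and define F(x) = π·x² + 3·arccos((1 + 2(1−x)·y − y²)/(2(1−x))) − 3·x²·arccos((1 − (1−x)² − (1−x−y)²)/(2(1−x)(1−x−y))) − (3/2)·√((3 − 2x − y)(1 − 2x − y)(1 − y²)). Then F is monotone increasing on the interval [1 − d/√3, (1−y)/2], and F(1 − d/√3) = 3·arccos(d/2) + (√3/4)·d² − (3/4)·d·√(4 − d²) − π/2. -/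
open Metric Real MeasureTheory
open scoped InnerProductSpace Pointwise ENNReal

noncomputable section

/-!
Put `u = 1 - x` and `v = 1 - x - y`. The two `arccos` terms of `F` are angles of the triangle with
sides `u`, `v`, `1`, the second one being `π - γ` for the angle `γ` opposite the side `1`, and the
radicand `Q` is `16` times the square of its area (Heron). Differentiating, the `arccos` and `√Q`
terms combine, so that `F' = 2x (π - 3 (π - γ)) + 3 (1 - y²) (1 - 2x - y)² / (v √Q)`. The last term
is positive, and `π - γ ≤ π/3` as long as `u² + uv + v² ≤ 1`. At the left endpoint
`x₀ = 1 - d/√3` this holds with equality, and since `u`, `v` decrease in `x` it persists on the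
whole interval. At `x₀` the triangle is explicit: the arguments of the `arccos` terms are
`cos (arccos (d/2) - π/6)` and `1/2`, and `Q` is a perfect square.
-/

theorem Real.sqrt_one_sub_div_sq {n c S : ℝ} (hc : 0 < c) (hS : 0 ≤ S)
    (h : n ^ 2 + S ^ 2 = c ^ 2) : √(1 - (n / c) ^ 2) = S / c := by
  rw [show 1 - (n / c) ^ 2 = (S / c) ^ 2 by field_simp; linarith, Real.sqrt_sq (by positivity)]

theorem HasDerivAt.arccos_div {f g : ℝ → ℝ} {f' g' S x : ℝ} (hf : HasDerivAt f f' x)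
    (hg : HasDerivAt g g' x) (hgx : 0 < g x) (hS : 0 < S) (h : f x ^ 2 + S ^ 2 = g x ^ 2) :
    HasDerivAt (fun z => arccos (f z / g z)) (-(f' * g x - f x * g') / (g x * S)) x := by
  have hlt : (f x / g x) ^ 2 < 1 := by
    rw [div_pow, div_lt_one (by positivity)]
    nlinarith
  have hne_one : f x / g x ≠ 1 := fun h1 => by norm_num [h1] at hlt
  have hne_neg_one : f x / g x ≠ -1 := fun h1 => by norm_num [h1] at hlt
  refine ((Real.hasDerivAt_arccos hne_neg_one hne_one).comp x
    (hf.div hg hgx.ne')).congr_deriv ?_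
  rw [Real.sqrt_one_sub_div_sq hgx hS.le h]
  field_simp

theorem Real.arccos_one_half : arccos (1 / 2) = π / 3 :=
  arccos_eq_of_eq_cos (by positivity) (by linarith [pi_pos]) cos_pi_div_three.symm

theorem Real.arccos_sqrt_three_div_two : arccos (√3 / 2) = π / 6 :=
  arccos_eq_of_eq_cos (by positivity) (by linarith [pi_pos]) cos_pi_div_six.symm

theorem arccos_sqrt_three_mul_add_sqrt_div_four {d : ℝ} (hd1 : -2 ≤ d) (hd2 : d ≤ √3) :
    arccos ((√3 * d + √(4 - d ^ 2)) / 4) = arccos (d / 2) - π / 6 := by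
  have hsin : sin (arccos (d / 2)) = √(4 - d ^ 2) / 2 := by
    rw [sin_arccos, show 1 - (d / 2) ^ 2 = (4 - d ^ 2) / 2 ^ 2 by ring,
      Real.sqrt_div' _ (by norm_num), Real.sqrt_sq zero_le_two]
  have hpi6 : π / 6 ≤ arccos (d / 2) := by
    rw [← Real.arccos_sqrt_three_div_two]
    exact arccos_le_arccos (by linarith)
  refine arccos_eq_of_eq_cos (by linarith) (by linarith [arccos_le_pi (d / 2), pi_pos]) ?_
  have hd2' : d / 2 ≤ 1 := by nlinarith [Real.sq_sqrt (show (0 : ℝ) ≤ 3 by norm_num)]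
  rw [cos_sub, cos_arccos (by linarith) hd2', hsin, cos_pi_div_six, sin_pi_div_six]
  ring

theorem div_sqrt_three (d : ℝ) : d / √3 = √3 * d / 3 := by
  field_simp
  linear_combination (-d) * Real.sq_sqrt (show (0 : ℝ) ≤ 3 by norm_num)

theorem sqrt_four_add_two_sq_sub {d : ℝ} (hd1 : 1 ≤ d) (hd2 : d ≤ 2) :
    √(4 + 2 * d ^ 2 - 2 * √3 * d * √(4 - d ^ 2)) = √3 * d - √(4 - d ^ 2) := by
  have h3 : √3 ^ 2 = 3 := Real.sq_sqrt (by norm_num)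
  have hs : √(4 - d ^ 2) ^ 2 = 4 - d ^ 2 := Real.sq_sqrt (by nlinarith)
  have hle : √(4 - d ^ 2) ≤ √3 * d := by
    rw [Real.sqrt_le_iff]
    exact ⟨by positivity, by nlinarith⟩
  rw [← Real.sqrt_sq (sub_nonneg.mpr hle)]
  congr 1
  linear_combination (-d ^ 2) * h3 - hs

theorem one_half_le_div_of_sq_add_mul_add_sq_le_one {u v : ℝ} (hu : 0 < u) (hv : 0 < v)
    (h : u ^ 2 + u * v + v ^ 2 ≤ 1) : 1 / 2 ≤ (1 - u ^ 2 - v ^ 2) / (2 * u * v) := by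
  rw [le_div_iff₀ (by positivity)]
  linarith

/-- The function `F(d, ·)`, with `d` entering only through `y`. -/
def caseTwoF (y x : ℝ) : ℝ :=
  π * x ^ 2 + 3 * arccos ((1 + 2 * (1 - x) * y - y ^ 2) / (2 * (1 - x)))
    - 3 * x ^ 2 * arccos ((1 - (1 - x) ^ 2 - (1 - x - y) ^ 2) / (2 * (1 - x) * (1 - x - y)))
    - 3 / 2 * √((3 - 2 * x - y) * (1 - 2 * x - y) * (1 - y ^ 2))

section caseTwoF

variable {y x : ℝ}

theorem heron_radicand_pos (hy : y ^ 2 < 1) (hx : 2 * x + y < 1) :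
    0 < (3 - 2 * x - y) * (1 - 2 * x - y) * (1 - y ^ 2) := by
  have : 0 < 1 - y ^ 2 := by linarith
  have : 0 < 1 - 2 * x - y := by linarith
  have : 0 < 3 - 2 * x - y := by linarith
  positivity

theorem hasDerivAt_caseTwoF (hy : y ^ 2 < 1) (hx : 2 * x + y < 1) :
    HasDerivAt (caseTwoF y)
      (2 * x * (π - 3 * arccos ((1 - (1 - x) ^ 2 - (1 - x - y) ^ 2)
          / (2 * (1 - x) * (1 - x - y))))
        + 3 * (1 - y ^ 2) * (1 - 2 * x - y) ^ 2
          / ((1 - x - y) * √((3 - 2 * x - y) * (1 - 2 * x - y) * (1 - y ^ 2)))) x := by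
  have hu : 0 < 1 - x := by nlinarith
  have hv : 0 < 1 - x - y := by nlinarith
  set Q := (3 - 2 * x - y) * (1 - 2 * x - y) * (1 - y ^ 2) with hQ_def
  have hQ : 0 < Q := heron_radicand_pos hy hx
  have hS : 0 < √Q := Real.sqrt_pos.mpr hQ
  have hid := hasDerivAt_id' x
  have hu' : HasDerivAt (fun z => 1 - z) (-1) x := by simpa using hid.const_sub 1
  have hv' : HasDerivAt (fun z => 1 - z - y) (-1) x := by simpa using hu'.sub_const y
  have hng : HasDerivAt (fun z => 1 + 2 * (1 - z) * y - y ^ 2) (-(2 * y)) x :=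
    (((hu'.const_mul 2).mul_const y).const_add 1 |>.sub_const (y ^ 2)).congr_deriv (by ring)
  have hdg : HasDerivAt (fun z => 2 * (1 - z)) (-2) x :=
    (hu'.const_mul 2).congr_deriv (by ring)
  have hnk : HasDerivAt (fun z => 1 - (1 - z) ^ 2 - (1 - z - y) ^ 2)
      (2 * (1 - x) + 2 * (1 - x - y)) x :=
    (((hu'.pow 2).const_sub 1).sub (hv'.pow 2)).congr_deriv (by ring)
  have hdk : HasDerivAt (fun z => 2 * (1 - z) * (1 - z - y))
      (-(2 * (1 - x) + 2 * (1 - x - y))) x :=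
    ((hu'.const_mul 2).mul hv').congr_deriv (by ring)
  have hdQ : HasDerivAt (fun z => (3 - 2 * z - y) * (1 - 2 * z - y) * (1 - y ^ 2))
      (-(4 * (2 - 2 * x - y) * (1 - y ^ 2))) x :=
    ((((hid.const_mul 2).const_sub 3 |>.sub_const y).mul
      ((hid.const_mul 2).const_sub 1 |>.sub_const y)).mul_const (1 - y ^ 2)).congr_deriv
      (by ring)
  have hF := (((hasDerivAt_pow 2 x).const_mul π).add
    ((hng.arccos_div hdg (by positivity) hS (by rw [Real.sq_sqrt hQ.le]; ring)).const_mul 3)).sub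
    (((hasDerivAt_pow 2 x).const_mul 3).mul
      (hnk.arccos_div hdk (by positivity) hS (by rw [Real.sq_sqrt hQ.le]; ring))) |>.sub
    ((hdQ.sqrt hQ.ne').const_mul (3 / 2))
  rw [← hQ_def] at hF
  refine hF.congr_deriv ?_
  norm_num
  field_simp
  ring

attribute [local fun_prop] Real.continuous_arccos in
theorem continuousOn_caseTwoF (hy : y ^ 2 < 1) :
    ContinuousOn (caseTwoF y) (Set.Iic ((1 - y) / 2)) := by
  have hu : ∀ x ∈ Set.Iic ((1 - y) / 2), 2 * (1 - x) ≠ 0 := fun x hx => by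
    rw [Set.mem_Iic] at hx
    nlinarith
  have huv : ∀ x ∈ Set.Iic ((1 - y) / 2), 2 * (1 - x) * (1 - x - y) ≠ 0 := fun x hx => by
    rw [Set.mem_Iic] at hx
    have : 0 < 1 - x := by nlinarith
    have : 0 < 1 - x - y := by nlinarith
    positivity
  unfold caseTwoF
  fun_prop (disch := assumption)

theorem caseTwoF_monotoneOn {a : ℝ} (hy : y ^ 2 < 1) (ha : 0 ≤ a)
    (hk : (1 - a) ^ 2 + (1 - a) * (1 - a - y) + (1 - a - y) ^ 2 ≤ 1) :
    MonotoneOn (caseTwoF y) (Set.Icc a ((1 - y) / 2)) := by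
  refine monotoneOn_of_deriv_nonneg (convex_Icc _ _)
    ((continuousOn_caseTwoF hy).mono Set.Icc_subset_Iic_self) (fun x hx => ?_) (fun x hx => ?_)
    <;> rw [interior_Icc, Set.mem_Ioo] at hx
  · exact (hasDerivAt_caseTwoF hy (by linarith)).differentiableAt.differentiableWithinAt
  rw [(hasDerivAt_caseTwoF hy (by linarith)).deriv]
  have hu : 0 < 1 - x := by nlinarith
  have hv : 0 < 1 - x - y := by nlinarith
  have hk' : (1 - x) ^ 2 + (1 - x) * (1 - x - y) + (1 - x - y) ^ 2 ≤ 1 :=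
    le_trans (by gcongr <;> linarith) hk
  have hangle := arccos_le_arccos (one_half_le_div_of_sq_add_mul_add_sq_le_one hu hv hk')
  rw [Real.arccos_one_half] at hangle
  have : 0 < 1 - y ^ 2 := by linarith
  have : 0 ≤ x := by linarith
  have : 0 ≤ π - 3 * arccos ((1 - (1 - x) ^ 2 - (1 - x - y) ^ 2)
      / (2 * (1 - x) * (1 - x - y))) := by linarith
  positivity

end caseTwoF

section endpoint

variable {d : ℝ}

theorem one_sub_sq_sqrt_three_mul_sub_sqrt_div_two (hd : d ^ 2 ≤ 4) :
    1 - ((√3 * d - √(4 - d ^ 2)) / 2) ^ 2 = d * (√3 * √(4 - d ^ 2) - d) / 2 := by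
  linear_combination (-d ^ 2 / 4) * Real.sq_sqrt (show (0 : ℝ) ≤ 3 by norm_num)
    - (1 / 4) * Real.sq_sqrt (show 0 ≤ 4 - d ^ 2 by linarith)

theorem sq_add_mul_add_sq_eq_one_of_div_sqrt_three (hd : d ^ 2 ≤ 4) :
    (d / √3) ^ 2 + d / √3 * (d / √3 - (√3 * d - √(4 - d ^ 2)) / 2)
      + (d / √3 - (√3 * d - √(4 - d ^ 2)) / 2) ^ 2 = 1 := by
  rw [div_sqrt_three]
  linear_combination (d ^ 2 / 12) * Real.sq_sqrt (show (0 : ℝ) ≤ 3 by norm_num)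
    + (1 / 4) * Real.sq_sqrt (show 0 ≤ 4 - d ^ 2 by linarith)

theorem lt_sqrt_three_mul_sqrt_four_sub_sq (hd0 : 0 < d) (hd : d < √3) :
    d < √3 * √(4 - d ^ 2) := by
  have hd3 : d ^ 2 < 3 := (Real.lt_sqrt hd0.le).mp hd
  rw [← Real.sqrt_mul (by norm_num), Real.lt_sqrt hd0.le]
  nlinarith

theorem caseTwoF_monotoneOn_Icc_one_sub_div_sqrt_three (hd0 : 0 < d) (hd : d < √3) :
    MonotoneOn (caseTwoF ((√3 * d - √(4 - d ^ 2)) / 2))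
      (Set.Icc (1 - d / √3) ((1 - (√3 * d - √(4 - d ^ 2)) / 2) / 2)) := by
  have hd3 : d ^ 2 < 3 := (Real.lt_sqrt hd0.le).mp hd
  have hts := lt_sqrt_three_mul_sqrt_four_sub_sq hd0 hd
  refine caseTwoF_monotoneOn ?_ ?_ ?_
  · nlinarith [one_sub_sq_sqrt_three_mul_sub_sqrt_div_two (d := d) (by linarith)]
  · rw [sub_nonneg, div_le_one (by positivity)]
    exact hd.le
  · rw [sub_sub_cancel]
    exact (sq_add_mul_add_sq_eq_one_of_div_sqrt_three (by linarith)).le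

theorem caseTwoF_one_sub_div_sqrt_three (hd0 : 0 < d) (hd : d < √3) :
    caseTwoF ((√3 * d - √(4 - d ^ 2)) / 2) (1 - d / √3)
      = 3 * arccos (d / 2) + √3 / 4 * d ^ 2 - 3 / 4 * d * √(4 - d ^ 2) - π / 2 := by
  have h3 : √3 ^ 2 = 3 := Real.sq_sqrt (by norm_num)
  have hd3 : d ^ 2 < 3 := (Real.lt_sqrt hd0.le).mp hd
  have hts := lt_sqrt_three_mul_sqrt_four_sub_sq hd0 hd
  have h1y := one_sub_sq_sqrt_three_mul_sub_sqrt_div_two (d := d) (by linarith)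
  have hsides := sq_add_mul_add_sq_eq_one_of_div_sqrt_three (d := d) (by linarith)
  have hdt := div_sqrt_three d
  set t := √3
  set s := √(4 - d ^ 2)
  have hs : s ^ 2 = 4 - d ^ 2 := Real.sq_sqrt (by linarith)
  have hv : 0 < d / t - (t * d - s) / 2 := by rw [hdt]; nlinarith
  have hangle₁ : (1 + 2 * (1 - (1 - d / t)) * ((t * d - s) / 2) - ((t * d - s) / 2) ^ 2)
      / (2 * (1 - (1 - d / t))) = (t * d + s) / 4 := by
    rw [sub_sub_cancel, hdt, div_eq_iff (by positivity)]
    linear_combination (-d ^ 2 / 12) * h3 - (1 / 4) * hs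
  have hangle₂ : (1 - (1 - (1 - d / t)) ^ 2 - (1 - (1 - d / t) - (t * d - s) / 2) ^ 2)
      / (2 * (1 - (1 - d / t)) * (1 - (1 - d / t) - (t * d - s) / 2)) = 1 / 2 := by
    rw [sub_sub_cancel, div_eq_iff (by positivity)]
    linear_combination -hsides
  have hprod : (3 - 2 * (1 - d / t) - (t * d - s) / 2) * (1 - 2 * (1 - d / t) - (t * d - s) / 2)
      = d * (t * s - d) / 6 := by
    rw [hdt]
    linear_combination (d ^ 2 / 36) * h3 + (1 / 4) * hs
  have hradicand : (d * (t * s - d) / 6) * (d * (t * s - d) / 2)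
      = (d * (3 * s - t * d) / 6) ^ 2 := by
    linear_combination (-d ^ 2 / 36) * ((t * s - d) ^ 2 - 2 * t * s * (t * s - d)
      + (t ^ 2 - 3) * s ^ 2) * h3
  have hQ : 0 ≤ d * (3 * s - t * d) / 6 := by nlinarith
  unfold caseTwoF
  rw [hangle₁, hangle₂, hprod, h1y, hradicand,
    arccos_sqrt_three_mul_add_sqrt_div_four (by linarith) hd.le,
    Real.arccos_one_half, Real.sqrt_sq hQ]
  ring

end endpoint

/-- The function `F(d, x)` from Case II of the proof of Theorem 1 is increasing in
`x` over `[r(Δ(d)), w(Δ(d))/2]`, and `F(d, r(Δ(d))) = a(Δ(d))`. -/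
theorem F_monotone (d : ℝ) (hd1 : 1 ≤ d) (hd2 : d < Real.sqrt 3) (y : ℝ)
    (hy : y = 1 / 2 * Real.sqrt (4 + 2 * d ^ 2
      - 2 * Real.sqrt 3 * d * Real.sqrt (4 - d ^ 2)))
    (F : ℝ → ℝ)
    (hF : ∀ x : ℝ, F x = π * x ^ 2
      + 3 * Real.arccos ((1 + 2 * (1 - x) * y - y ^ 2) / (2 * (1 - x)))
      - 3 * x ^ 2 * Real.arccos ((1 - (1 - x) ^ 2 - (1 - x - y) ^ 2)
          / (2 * (1 - x) * (1 - x - y)))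
      - 3 / 2 * Real.sqrt ((3 - 2 * x - y) * (1 - 2 * x - y) * (1 - y ^ 2))) :
    MonotoneOn F (Set.Icc (1 - d / Real.sqrt 3) ((1 - y) / 2)) ∧
    F (1 - d / Real.sqrt 3) = 3 * Real.arccos (d / 2) + Real.sqrt 3 / 4 * d ^ 2
      - 3 / 4 * d * Real.sqrt (4 - d ^ 2) - π / 2 := by
  have hd0 : 0 < d := by linarith
  have hd_le_two : d ≤ 2 := by
    nlinarith [Real.sqrt_nonneg 3, Real.sq_sqrt (show (0 : ℝ) ≤ 3 by norm_num)]
  have hy' : y = (√3 * d - √(4 - d ^ 2)) / 2 := by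
    rw [hy, sqrt_four_add_two_sq_sub hd1 hd_le_two]
    ring
  rw [show F = caseTwoF y from funext hF, hy']
  exact ⟨caseTwoF_monotoneOn_Icc_one_sub_div_sqrt_three hd0 hd2,
    caseTwoF_one_sub_div_sqrt_three hd0 hd2⟩
end
end

section
/- Let 1 ≤ d < √3 and let Δ(d) be the intersection of the three closed unit balls in ℝ² centered at c₁ = (0,0), c₂ = (d,0), c₃ = (d/2, (√3/2)·d). Then the inradius of Δ(d) equals 1 − d/√3. -/
open Metric Real MeasureTheory
open scoped InnerProductSpace Pointwise ENNReal

noncomputable section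

/-! The ball centred at the centroid of the triangle with radius `1 - d/√3` fits, since the
centroid lies at distance `d/√3` from each vertex. Conversely, a ball `closedBall x r` inside the
three unit disks has `dist x cᵢ ≤ 1 - r`, while the sum of the squared distances from any point to
the vertices of an equilateral triangle of side `d` is at least `d²` (with equality at the
centroid). -/

theorem dist_add_le_of_closedBall_subset {E : Type*} [NormedAddCommGroup E] [NormedSpace ℝ E]
    [Nontrivial E] {c c' : E} {r R : ℝ} (hr : 0 ≤ r) (h : closedBall c r ⊆ closedBall c' R) :
    dist c c' + r ≤ R := by
  obtain ⟨u, hu, hray⟩ : ∃ u : E, ‖u‖ = 1 ∧ SameRay ℝ (c - c') u := by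
    rcases eq_or_ne c c' with rfl | hne
    · obtain ⟨u, hu⟩ := exists_norm_eq E zero_le_one
      exact ⟨u, hu, by simp⟩
    · exact ⟨‖c - c'‖⁻¹ • (c - c'), norm_smul_inv_norm (sub_ne_zero.2 hne),
        SameRay.sameRay_nonneg_smul_right _ (by positivity)⟩
  have hfar : c + r • u ∈ closedBall c' R :=
    h (by simp [norm_smul, hu, abs_of_nonneg hr])
  rwa [mem_closedBall, dist_eq_norm, add_sub_right_comm, (hray.nonneg_smul_right hr).norm_add,
    norm_smul, hu, Real.norm_of_nonneg hr, mul_one, ← dist_eq_norm] at hfar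

theorem norm_sub_sq_add_norm_sub_sq_add_norm_sub_sq_le {E : Type*} [NormedAddCommGroup E]
    [InnerProductSpace ℝ E] (u v w : E) :
    ‖u - v‖ ^ 2 + ‖v - w‖ ^ 2 + ‖w - u‖ ^ 2 ≤ 3 * (‖u‖ ^ 2 + ‖v‖ ^ 2 + ‖w‖ ^ 2) := by
  have hsum : 0 ≤ ‖u + v + w‖ ^ 2 := sq_nonneg _
  rw [norm_add_sq_real, norm_add_sq_real, inner_add_left] at hsum
  rw [norm_sub_sq_real, norm_sub_sq_real, norm_sub_sq_real, real_inner_comm u w]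
  linarith

theorem dist_sq_add_dist_sq_add_dist_sq_le {E : Type*} [NormedAddCommGroup E]
    [InnerProductSpace ℝ E] (x a b c : E) :
    dist a b ^ 2 + dist b c ^ 2 + dist c a ^ 2 ≤
      3 * (dist x a ^ 2 + dist x b ^ 2 + dist x c ^ 2) := by
  simpa only [dist_eq_norm, norm_sub_rev x, sub_sub_sub_cancel_right] using
    norm_sub_sq_add_norm_sub_sq_add_norm_sub_sq_le (a - x) (b - x) (c - x)

theorem le_sqrt_three_mul_of_closedBall_subset_inter {E : Type*} [NormedAddCommGroup E]
    [InnerProductSpace ℝ E] [Nontrivial E] {a b c x : E} {d r R : ℝ}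
    (hab : dist a b = d) (hbc : dist b c = d) (hca : dist c a = d) (hr : 0 ≤ r)
    (h : closedBall x r ⊆ closedBall a R ∩ closedBall b R ∩ closedBall c R) :
    d ≤ √3 * (R - r) := by
  have hsq : ∀ {p : E}, closedBall x r ⊆ closedBall p R → dist x p ^ 2 ≤ (R - r) ^ 2 :=
    fun hp => pow_le_pow_left₀ dist_nonneg
      (by linarith [dist_add_le_of_closedBall_subset hr hp]) 2
  have ha := hsq (h.trans (Set.inter_subset_left.trans Set.inter_subset_left))
  have hb := hsq (h.trans (Set.inter_subset_left.trans Set.inter_subset_right))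
  have hc := hsq (h.trans Set.inter_subset_right)
  have hsum := dist_sq_add_dist_sq_add_dist_sq_le x a b c
  rw [hab, hbc, hca] at hsum
  have hRr : 0 ≤ R - r := by
    linarith [dist_nonneg (x := x) (y := c),
      dist_add_le_of_closedBall_subset hr (h.trans Set.inter_subset_right)]
  refine le_of_pow_le_pow_left₀ two_ne_zero (by positivity) ?_
  rw [mul_pow, Real.sq_sqrt zero_le_three]
  linarith

theorem dist_pt_pt (a b a' b' : ℝ) :
    dist (pt a b) (pt a' b') = √((a - a') ^ 2 + (b - b') ^ 2) := by
  simp [EuclideanSpace.dist_eq, pt, Fin.sum_univ_two, Real.dist_eq, sq_abs]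

/-- The inradius of the regular disk-triangle `Δ(d)` equals `1 - d/√3`. -/
theorem inradius_disk_triangle (d : ℝ) (hd1 : 1 ≤ d) (hd2 : d < Real.sqrt 3) :
    inradius (closedBall (pt 0 0) 1 ∩ closedBall (pt d 0) 1
        ∩ closedBall (pt (d / 2) (Real.sqrt 3 / 2 * d)) 1)
      = 1 - d / Real.sqrt 3 := by
  set s := √3
  have hs : s ^ 2 = 3 := Real.sq_sqrt zero_le_three
  have hs0 : 0 < s := by positivity
  have hd0 : 0 ≤ d := zero_le_one.trans hd1
  have hside : ∀ {a b a' b' : ℝ}, (a - a') ^ 2 + (b - b') ^ 2 = d ^ 2 →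
      dist (pt a b) (pt a' b') = d := fun h => by rw [dist_pt_pt, h, Real.sqrt_sq hd0]
  have hcentroid : ∀ {a b : ℝ}, (d / 2 - a) ^ 2 + (s * d / 6 - b) ^ 2 = d ^ 2 / 3 →
      closedBall (pt (d / 2) (s * d / 6)) (1 - d / s) ⊆ closedBall (pt a b) 1 := fun h => by
    refine closedBall_subset_closedBall' ?_
    rw [dist_pt_pt, h, ← hs, ← div_pow, Real.sqrt_sq (by positivity), sub_add_cancel]
  unfold inradius
  refine IsGreatest.csSup_eq ⟨⟨?_, pt (d / 2) (s * d / 6), ?_⟩, ?_⟩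
  · rw [sub_nonneg, div_le_one hs0]
    exact hd2.le
  · refine Set.subset_inter (Set.subset_inter (hcentroid ?_) (hcentroid ?_)) (hcentroid ?_)
    · linear_combination (d ^ 2 / 36) * hs
    · linear_combination (d ^ 2 / 36) * hs
    · linear_combination (d ^ 2 / 9) * hs
  · rintro r ⟨hr, c, hc⟩
    have hd := le_sqrt_three_mul_of_closedBall_subset_inter (hside ?_) (hside ?_) (hside ?_) hr hc
    · rw [le_sub_comm, div_le_iff₀ hs0]
      linarith
    · ring
    · linear_combination (d ^ 2 / 4) * hs
    · linear_combination (d ^ 2 / 4) * hs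
end
end

section
/- Let 1 ≤ d < √3 and let Δ(d) be the intersection of the three closed unit balls in ℝ² centered at c₁ = (0,0), c₂ = (d,0), c₃ = (d/2, (√3/2)·d). Then the area of Δ(d) equals 3·arccos(d/2) + (√3/4)·d² − (3/4)·d·√(4 − d²) − π/2. -/
open Metric Real MeasureTheory
open scoped InnerProductSpace Pointwise ENNReal

noncomputable section

/-!
Slice `Δ(d)` by vertical lines. Over `x` between the abscissae `d - x₀` and `x₀` of its two lower
vertices, the section runs from the lower arc of the top disk up to the lower of the upper arcs of
the two bottom disks, and the section is empty elsewhere. Its length is symmetric about `x = d/2`,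
antitone to the right of `d/2` and vanishes at `x₀`, so the area is twice its integral over
`[d/2, x₀]`. That integral is read off from the primitive `(arcsin t + t √(1 - t²)) / 2` of
`√(1 - t²)`, using `x₀ = sin (α + π/6)` and `x₀ - d/2 = sin (α - π/6)` with `α = arccos (d/2)`.
-/

open Set

theorem measure_prod_eq_ofReal_integral {α β : Type*} [MeasurableSpace α] [MeasurableSpace β]
    {μ : Measure α} {ν : Measure β} [SFinite ν] {T : Set (α × β)} (hT : MeasurableSet T)
    {s : Set α} (hs : MeasurableSet s) {ℓ : α → ℝ} (hℓ : IntegrableOn ℓ s μ)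
    (hℓ₀ : ∀ x ∈ s, 0 ≤ ℓ x) (h_in : ∀ x ∈ s, ν (Prod.mk x ⁻¹' T) = ENNReal.ofReal (ℓ x))
    (h_out : ∀ x ∉ s, ν (Prod.mk x ⁻¹' T) = 0) :
    μ.prod ν T = ENNReal.ofReal (∫ x in s, ℓ x ∂μ) := by
  rw [Measure.prod_apply hT, ofReal_integral_eq_lintegral_ofReal hℓ
    ((ae_restrict_iff' hs).2 (ae_of_all _ hℓ₀)), ← lintegral_indicator hs]
  congr 1
  funext x
  by_cases hx : x ∈ s
  · rw [indicator_of_mem hx, h_in x hx]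
  · rw [indicator_of_notMem hx, h_out x hx]

/-- Not `closedBall (a, b) 1`, which is a square for the sup metric of `ℝ × ℝ`. -/
def unitDisk (a b : ℝ) : Set (ℝ × ℝ) := {p | (p.1 - a) ^ 2 + (p.2 - b) ^ 2 ≤ 1}

theorem measurableSet_unitDisk (a b : ℝ) : MeasurableSet (unitDisk a b) :=
  measurableSet_le (by fun_prop) measurable_const

theorem measurePreserving_coords : MeasurePreserving (fun p : E2 => (p 0, p 1)) :=
  (volume_preserving_finTwoArrow ℝ).comp (PiLp.volume_preserving_ofLp (Fin 2))

theorem coords_preimage_unitDisk (a b : ℝ) :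
    (fun p : E2 => (p 0, p 1)) ⁻¹' unitDisk a b = closedBall (pt a b) 1 := by
  ext p
  simp [unitDisk, EuclideanSpace.dist_eq, pt, Real.dist_eq, sq_abs]

theorem mk_preimage_unitDisk_subset (x a b : ℝ) :
    Prod.mk x ⁻¹' unitDisk a b ⊆ Icc (b - √(1 - (x - a) ^ 2)) (b + √(1 - (x - a) ^ 2)) := by
  intro y hy
  have h := abs_le.1 (Real.abs_le_sqrt (show (y - b) ^ 2 ≤ 1 - (x - a) ^ 2 by
    change (x - a) ^ 2 + (y - b) ^ 2 ≤ 1 at hy; linarith))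
  constructor <;> linarith [h.1, h.2]

theorem mk_preimage_unitDisk {x a : ℝ} (b : ℝ) (hx : (x - a) ^ 2 ≤ 1) :
    Prod.mk x ⁻¹' unitDisk a b = Icc (b - √(1 - (x - a) ^ 2)) (b + √(1 - (x - a) ^ 2)) := by
  refine (mk_preimage_unitDisk_subset x a b).antisymm fun y hy => ?_
  have h := (Real.sq_le (x := y - b) (sub_nonneg.2 hx)).2 ⟨by linarith [hy.1], by linarith [hy.2]⟩
  change (x - a) ^ 2 + (y - b) ^ 2 ≤ 1
  linarith

def areaUnderArc (t : ℝ) : ℝ := (arcsin t + t * √(1 - t ^ 2)) / 2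

theorem areaUnderArc_zero : areaUnderArc 0 = 0 := by
  simp [areaUnderArc]

theorem hasDerivAt_areaUnderArc {t : ℝ} (h₁ : -1 < t) (h₂ : t < 1) :
    HasDerivAt areaUnderArc (√(1 - t ^ 2)) t := by
  have hpos : 0 < 1 - t ^ 2 := by nlinarith
  have hroot : HasDerivAt (fun t : ℝ => √(1 - t ^ 2)) (-(2 * t) / (2 * √(1 - t ^ 2))) t := by
    simpa using ((hasDerivAt_pow 2 t).const_sub 1).sqrt hpos.ne'
  have hsq := Real.sq_sqrt hpos.le
  refine (((Real.hasDerivAt_arcsin h₁.ne' h₂.ne).add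
    ((hasDerivAt_id' t).mul hroot)).div_const 2).congr_deriv ?_
  field_simp
  linear_combination -hsq

theorem integral_sqrt_one_sub_sq_eq_areaUnderArc {a b : ℝ} (ha : -1 ≤ a) (hab : a ≤ b)
    (hb : b ≤ 1) : ∫ x in a..b, √(1 - x ^ 2) = areaUnderArc b - areaUnderArc a :=
  intervalIntegral.integral_eq_sub_of_hasDerivAt_of_le hab
    (by unfold areaUnderArc; fun_prop)
    (fun x hx => hasDerivAt_areaUnderArc (by linarith [hx.1]) (by linarith [hx.2]))
    ((by fun_prop : Continuous fun x : ℝ => √(1 - x ^ 2)).intervalIntegrable _ _)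

def diskTriangle (d : ℝ) : Set (ℝ × ℝ) :=
  unitDisk 0 0 ∩ unitDisk d 0 ∩ unitDisk (d / 2) (√3 / 2 * d)

/-- The length of the vertical section of `diskTriangle d` at abscissa `x` where that section is
nonempty, and `≤ 0` elsewhere. -/
def sectionLength (d x : ℝ) : ℝ :=
  min (√(1 - x ^ 2)) (√(1 - (x - d) ^ 2)) - (√3 / 2 * d - √(1 - (x - d / 2) ^ 2))

/-- The abscissa of the lower right vertex of `diskTriangle d`, where the boundary circles of the
first and the third disk meet. -/
def vertexAbscissa (d : ℝ) : ℝ := (d + √3 * √(4 - d ^ 2)) / 4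

variable {d x : ℝ}

theorem coords_preimage_diskTriangle (d : ℝ) :
    (fun p : E2 => (p 0, p 1)) ⁻¹' diskTriangle d = closedBall (pt 0 0) 1 ∩ closedBall (pt d 0) 1
      ∩ closedBall (pt (d / 2) (√3 / 2 * d)) 1 := by
  simp only [diskTriangle, preimage_inter, coords_preimage_unitDisk]

theorem measurableSet_diskTriangle (d : ℝ) : MeasurableSet (diskTriangle d) :=
  ((measurableSet_unitDisk _ _).inter (measurableSet_unitDisk _ _)).inter
    (measurableSet_unitDisk _ _)

theorem mk_preimage_diskTriangle_subset (d x : ℝ) :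
    Prod.mk x ⁻¹' diskTriangle d ⊆
      Icc (√3 / 2 * d - √(1 - (x - d / 2) ^ 2)) (min (√(1 - x ^ 2)) (√(1 - (x - d) ^ 2))) := by
  rintro y ⟨⟨h₁, h₂⟩, h₃⟩
  have h₁ := (mk_preimage_unitDisk_subset x 0 0 h₁).2
  have h₂ := (mk_preimage_unitDisk_subset x d 0 h₂).2
  have h₃ := (mk_preimage_unitDisk_subset x (d / 2) _ h₃).1
  simp only [sub_zero, zero_add] at h₁ h₂
  exact ⟨h₃, le_min h₁ h₂⟩

theorem sqrt_one_sub_sq_sub_half_le (hd : 0 ≤ d) (hxd : x ≤ d) (hx : x ^ 2 ≤ 1) :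
    √(1 - (x - d / 2) ^ 2) ≤ √3 / 2 * d + √(1 - x ^ 2) := by
  have h3 := Real.sq_sqrt (show (0 : ℝ) ≤ 3 by norm_num)
  have hx' := Real.sq_sqrt (sub_nonneg.2 hx)
  have hsum : 0 ≤ √3 / 2 * d + √(1 - x ^ 2) := by positivity
  rw [Real.sqrt_le_left hsum]
  have key : (√3 / 2 * d + √(1 - x ^ 2)) ^ 2 - (1 - (x - d / 2) ^ 2)
      = d * (d - x) + √3 * d * √(1 - x ^ 2) := by
    linear_combination (d ^ 2 / 4) * h3 + hx'
  nlinarith [mul_nonneg hd (sub_nonneg.2 hxd),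
    mul_nonneg (mul_nonneg (Real.sqrt_nonneg 3) hd) (Real.sqrt_nonneg (1 - x ^ 2))]

theorem mk_preimage_diskTriangle (hd : 1 ≤ d) (hd3 : d ^ 2 ≤ 3) (hx : x ∈ Icc (d - 1) 1) :
    Prod.mk x ⁻¹' diskTriangle d =
      Icc (√3 / 2 * d - √(1 - (x - d / 2) ^ 2)) (min (√(1 - x ^ 2)) (√(1 - (x - d) ^ 2))) := by
  obtain ⟨hx₁, hx₂⟩ := hx
  refine (mk_preimage_diskTriangle_subset d x).antisymm ?_
  rw [diskTriangle, preimage_inter, preimage_inter, mk_preimage_unitDisk _ (by nlinarith),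
    mk_preimage_unitDisk _ (by nlinarith), mk_preimage_unitDisk _ (by nlinarith),
    Icc_inter_Icc, Icc_inter_Icc]
  simp only [sub_zero, zero_sub, zero_add]
  have h3 := Real.sq_sqrt (show (0 : ℝ) ≤ 3 by norm_num)
  have h₁ := sqrt_one_sub_sq_sub_half_le (d := d) (x := x) (by linarith) (by linarith)
    (by nlinarith)
  have h₂ := sqrt_one_sub_sq_sub_half_le (d := d) (x := d - x) (by linarith) (by linarith)
    (by nlinarith)
  rw [show (d - x - d / 2) ^ 2 = (x - d / 2) ^ 2 by ring,
    show (d - x) ^ 2 = (x - d) ^ 2 by ring] at h₂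
  -- the upper arc of the top disk stays above the bottom disks since `|x - d/2| ≤ 1/2`
  have h₃ : √3 / 2 ≤ √(1 - (x - d / 2) ^ 2) :=
    Real.le_sqrt_of_sq_le (by nlinarith)
  have h₄ : √(1 - x ^ 2) ≤ 1 := Real.sqrt_le_one.2 (by nlinarith)
  refine Icc_subset_Icc (max_le (max_le ?_ ?_) le_rfl) (le_min le_rfl ?_)
  · linarith
  · linarith
  · nlinarith [min_le_left (√(1 - x ^ 2)) (√(1 - (x - d) ^ 2)), Real.sqrt_nonneg 3]

theorem continuous_sectionLength (d : ℝ) : Continuous (sectionLength d) := by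
  unfold sectionLength
  fun_prop

theorem sectionLength_sub_left (d x : ℝ) : sectionLength d (d - x) = sectionLength d x := by
  rw [sectionLength, sectionLength, min_comm, show (d - x) ^ 2 = (x - d) ^ 2 by ring,
    show (d - x - d) ^ 2 = x ^ 2 by ring, show (d - x - d / 2) ^ 2 = (x - d / 2) ^ 2 by ring]

theorem sectionLength_of_half_le (hd : 0 ≤ d) (hx : d / 2 ≤ x) :
    sectionLength d x = √(1 - x ^ 2) - (√3 / 2 * d - √(1 - (x - d / 2) ^ 2)) := by
  rw [sectionLength, min_eq_left (Real.sqrt_le_sqrt (by nlinarith))]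

theorem antitoneOn_sectionLength (hd : 0 ≤ d) : AntitoneOn (sectionLength d) (Ici (d / 2)) := by
  intro x hx y hy hxy
  rw [sectionLength_of_half_le hd hx, sectionLength_of_half_le hd hy]
  have h₁ : √(1 - y ^ 2) ≤ √(1 - x ^ 2) := Real.sqrt_le_sqrt (by nlinarith [mem_Ici.1 hx])
  have h₂ : √(1 - (y - d / 2) ^ 2) ≤ √(1 - (x - d / 2) ^ 2) :=
    Real.sqrt_le_sqrt (by nlinarith [mem_Ici.1 hx])
  linarith

theorem half_le_vertexAbscissa (hd3 : d ^ 2 ≤ 3) : d / 2 ≤ vertexAbscissa d := by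
  have h : d ≤ √3 * √(4 - d ^ 2) := by
    rw [← Real.sqrt_mul (by norm_num)]
    exact Real.le_sqrt_of_sq_le (by nlinarith)
  rw [vertexAbscissa]
  linarith

theorem areaUnderArc_sin {θ : ℝ} (h₁ : -(π / 2) ≤ θ) (h₂ : θ ≤ π / 2) :
    areaUnderArc (sin θ) = (θ + sin θ * cos θ) / 2 := by
  rw [areaUnderArc, Real.arcsin_sin h₁ h₂, ← Real.cos_eq_sqrt_one_sub_sin_sq h₁ h₂]

theorem cos_arccos_half (hd : -2 ≤ d) (hd' : d ≤ 2) : cos (arccos (d / 2)) = d / 2 :=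
  Real.cos_arccos (by linarith) (by linarith)

theorem sin_arccos_half (d : ℝ) : sin (arccos (d / 2)) = √(4 - d ^ 2) / 2 := by
  rw [Real.sin_arccos, show 1 - (d / 2) ^ 2 = (4 - d ^ 2) / 2 ^ 2 by ring,
    Real.sqrt_div' _ (by positivity), Real.sqrt_sq (by norm_num)]

theorem arccos_half_le_pi_div_three (hd : 1 ≤ d) : arccos (d / 2) ≤ π / 3 := by
  calc arccos (d / 2) ≤ arccos (cos (π / 3)) := by
        rw [Real.cos_pi_div_three]
        exact Real.antitone_arccos (by linarith)
    _ = π / 3 := Real.arccos_cos (by positivity) (by linarith [Real.pi_pos])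

theorem vertexAbscissa_eq_sin (hd : -2 ≤ d) (hd' : d ≤ 2) :
    vertexAbscissa d = sin (arccos (d / 2) + π / 6) := by
  rw [Real.sin_add, sin_arccos_half, cos_arccos_half hd hd', Real.sin_pi_div_six,
    Real.cos_pi_div_six, vertexAbscissa]
  ring

theorem vertexAbscissa_sub_half_eq_sin (hd : -2 ≤ d) (hd' : d ≤ 2) :
    vertexAbscissa d - d / 2 = sin (arccos (d / 2) - π / 6) := by
  rw [Real.sin_sub, sin_arccos_half, cos_arccos_half hd hd', Real.sin_pi_div_six,
    Real.cos_pi_div_six, vertexAbscissa]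
  ring

theorem sectionLength_vertexAbscissa (hd : 1 ≤ d) (hd3 : d ^ 2 ≤ 3) :
    sectionLength d (vertexAbscissa d) = 0 := by
  have hd2 : d ≤ 2 := by nlinarith
  have hα₀ := Real.arccos_nonneg (d / 2)
  have hα := arccos_half_le_pi_div_three hd
  have hπ := Real.pi_pos
  have hsub := vertexAbscissa_sub_half_eq_sin (by linarith) hd2
  rw [sectionLength_of_half_le (by linarith) (half_le_vertexAbscissa hd3), hsub,
    vertexAbscissa_eq_sin (by linarith) hd2, ← Real.cos_eq_sqrt_one_sub_sin_sq (by linarith)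
    (by linarith), ← Real.cos_eq_sqrt_one_sub_sin_sq (by linarith) (by linarith),
    Real.cos_add, Real.cos_sub, cos_arccos_half (by linarith) hd2, Real.cos_pi_div_six]
  ring

theorem sectionLength_nonneg (hd : 1 ≤ d) (hd3 : d ^ 2 ≤ 3)
    (hx : x ∈ Icc (d - vertexAbscissa d) (vertexAbscissa d)) : 0 ≤ sectionLength d x := by
  wlog hx' : d / 2 ≤ x generalizing x
  · rw [← sectionLength_sub_left]
    exact this ⟨by linarith [hx.2], by linarith [hx.1]⟩ (by linarith)
  rw [← sectionLength_vertexAbscissa hd hd3]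
  exact antitoneOn_sectionLength (by linarith) hx' (half_le_vertexAbscissa hd3) hx.2

theorem sectionLength_nonpos (hd : 1 ≤ d) (hd3 : d ^ 2 ≤ 3)
    (hx : x ∉ Icc (d - vertexAbscissa d) (vertexAbscissa d)) : sectionLength d x ≤ 0 := by
  wlog hx' : d / 2 ≤ x generalizing x
  · rw [← sectionLength_sub_left]
    exact this (fun h => hx ⟨by linarith [h.2], by linarith [h.1]⟩) (by linarith)
  have h₀ := half_le_vertexAbscissa hd3
  have hx₀ : vertexAbscissa d ≤ x := by
    by_contra! h
    exact hx ⟨by linarith, h.le⟩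
  rw [← sectionLength_vertexAbscissa hd hd3]
  exact antitoneOn_sectionLength (by linarith) h₀ hx' hx₀

theorem integral_sectionLength_half_vertexAbscissa (hd : 1 ≤ d) (hd3 : d ^ 2 ≤ 3) :
    ∫ x in d / 2..vertexAbscissa d, sectionLength d x =
      areaUnderArc (vertexAbscissa d) - areaUnderArc (d / 2)
        + areaUnderArc (vertexAbscissa d - d / 2) - √3 / 2 * d * (vertexAbscissa d - d / 2) := by
  have hd2 : d ≤ 2 := by nlinarith
  have h₀ := half_le_vertexAbscissa hd3
  have h₁ : vertexAbscissa d ≤ 1 := vertexAbscissa_eq_sin (by linarith) hd2 ▸ Real.sin_le_one _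
  have h₁' : vertexAbscissa d - d / 2 ≤ 1 :=
    vertexAbscissa_sub_half_eq_sin (by linarith) hd2 ▸ Real.sin_le_one _
  have hcont₁ : Continuous fun x : ℝ => √(1 - x ^ 2) := by fun_prop
  have hcont₂ : Continuous fun x : ℝ => √(1 - (x - d / 2) ^ 2) := by fun_prop
  rw [intervalIntegral.integral_congr (g := fun x => √(1 - x ^ 2) - √3 / 2 * d
      + √(1 - (x - d / 2) ^ 2)) fun x hx => by
      rw [sectionLength_of_half_le (by linarith) (uIcc_of_le h₀ ▸ hx).1]; ring,
    intervalIntegral.integral_add ((hcont₁.intervalIntegrable _ _).sub intervalIntegrable_const)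
      (hcont₂.intervalIntegrable _ _),
    intervalIntegral.integral_sub (hcont₁.intervalIntegrable _ _) intervalIntegrable_const,
    intervalIntegral.integral_const, intervalIntegral.integral_comp_sub_right
      (fun x => √(1 - x ^ 2)),
    integral_sqrt_one_sub_sq_eq_areaUnderArc (by linarith) h₀ h₁, sub_self,
    integral_sqrt_one_sub_sq_eq_areaUnderArc (by norm_num) (by linarith) h₁']
  rw [areaUnderArc_zero, smul_eq_mul]
  ring

theorem integral_sectionLength (hd : 1 ≤ d) (hd3 : d ^ 2 ≤ 3) :
    ∫ x in d - vertexAbscissa d..vertexAbscissa d, sectionLength d x =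
      3 * arccos (d / 2) + √3 / 4 * d ^ 2 - 3 / 4 * d * √(4 - d ^ 2) - π / 2 := by
  have hd2 : d ≤ 2 := by nlinarith
  have hα₀ := Real.arccos_nonneg (d / 2)
  have hα := arccos_half_le_pi_div_three hd
  have hπ := Real.pi_pos
  have hint := (continuous_sectionLength d).intervalIntegrable (μ := volume)
  have hleft : ∫ x in d - vertexAbscissa d..d / 2, sectionLength d x
      = ∫ x in d / 2..vertexAbscissa d, sectionLength d x := by
    calc ∫ x in d - vertexAbscissa d..d / 2, sectionLength d x
        = ∫ x in d - vertexAbscissa d..d - d / 2, sectionLength d x := by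
          rw [show d - d / 2 = d / 2 by ring]
      _ = ∫ x in d / 2..vertexAbscissa d, sectionLength d (d - x) :=
          (intervalIntegral.integral_comp_sub_left _ d).symm
      _ = ∫ x in d / 2..vertexAbscissa d, sectionLength d x := by
          simp only [sectionLength_sub_left]
  have hA₁ : areaUnderArc (vertexAbscissa d) = (arccos (d / 2) + π / 6
      + sin (arccos (d / 2) + π / 6) * cos (arccos (d / 2) + π / 6)) / 2 := by
    rw [vertexAbscissa_eq_sin (by linarith) hd2, areaUnderArc_sin (by linarith) (by linarith)]
  have hA₂ : areaUnderArc (vertexAbscissa d - d / 2) = (arccos (d / 2) - π / 6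
      + sin (arccos (d / 2) - π / 6) * cos (arccos (d / 2) - π / 6)) / 2 := by
    rw [vertexAbscissa_sub_half_eq_sin (by linarith) hd2,
      areaUnderArc_sin (by linarith) (by linarith)]
  have hA₃ : areaUnderArc (d / 2) = (π / 2 - arccos (d / 2)
      + sin (π / 2 - arccos (d / 2)) * cos (π / 2 - arccos (d / 2))) / 2 := by
    have h : d / 2 = sin (π / 2 - arccos (d / 2)) := by
      rw [Real.sin_pi_div_two_sub, cos_arccos_half (by linarith) hd2]
    conv_lhs => rw [h]
    exact areaUnderArc_sin (by linarith) (by linarith)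
  rw [← intervalIntegral.integral_add_adjacent_intervals (hint _ _) (hint _ _), hleft,
    integral_sectionLength_half_vertexAbscissa hd hd3, hA₁, hA₂, hA₃]
  simp only [Real.sin_add, Real.cos_add, Real.sin_sub, Real.cos_sub, Real.sin_pi_div_two,
    Real.cos_pi_div_two, Real.sin_pi_div_six, Real.cos_pi_div_six, sin_arccos_half,
    cos_arccos_half (by linarith : -2 ≤ d) hd2]
  rw [vertexAbscissa]
  have h3 := Real.sq_sqrt (show (0 : ℝ) ≤ 3 by norm_num)
  linear_combination (-(√(4 - d ^ 2) * d) / 8) * h3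

theorem volume_diskTriangle (hd : 1 ≤ d) (hd3 : d ^ 2 ≤ 3) :
    volume (diskTriangle d) =
      ENNReal.ofReal (∫ x in d - vertexAbscissa d..vertexAbscissa d, sectionLength d x) := by
  have hd2 : d ≤ 2 := by nlinarith
  have h₀ := half_le_vertexAbscissa hd3
  have h₁ : vertexAbscissa d ≤ 1 := vertexAbscissa_eq_sin (by linarith) hd2 ▸ Real.sin_le_one _
  rw [intervalIntegral.integral_of_le (by linarith), ← integral_Icc_eq_integral_Ioc,
    Measure.volume_eq_prod]
  refine measure_prod_eq_ofReal_integral (measurableSet_diskTriangle d) measurableSet_Icc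
    (continuous_sectionLength d).integrableOn_Icc (fun x hx => sectionLength_nonneg hd hd3 hx)
    (fun x hx => ?_) (fun x hx => ?_)
  · rw [mk_preimage_diskTriangle hd hd3 ⟨by linarith [hx.1], by linarith [hx.2]⟩,
      Real.volume_Icc, sectionLength]
  · refine measure_mono_null (mk_preimage_diskTriangle_subset d x) ?_
    rw [Real.volume_Icc, ENNReal.ofReal_eq_zero]
    exact sectionLength_nonpos hd hd3 hx

/-- The area of the regular disk-triangle `Δ(d)` equals
`3·arccos(d/2) + (√3/4)d² - (3/4)d√(4 - d²) - π/2`. -/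
theorem area_disk_triangle (d : ℝ) (hd1 : 1 ≤ d) (hd2 : d < Real.sqrt 3) :
    volume (closedBall (pt 0 0) 1 ∩ closedBall (pt d 0) 1
        ∩ closedBall (pt (d / 2) (Real.sqrt 3 / 2 * d)) 1)
      = ENNReal.ofReal (3 * Real.arccos (d / 2) + Real.sqrt 3 / 4 * d ^ 2
          - 3 / 4 * d * Real.sqrt (4 - d ^ 2) - π / 2) := by
  have hd3 : d ^ 2 ≤ 3 := by
    nlinarith [Real.sq_sqrt (show (0 : ℝ) ≤ 3 by norm_num), Real.sqrt_nonneg 3]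
  rw [← coords_preimage_diskTriangle, measurePreserving_coords.measure_preimage
    (measurableSet_diskTriangle d).nullMeasurableSet, volume_diskTriangle hd1 hd3,
    integral_sectionLength hd1 hd3]
end
end
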